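/- arXiv:1608.08931 — 3 statements merged into one kernel-verified Lean document; each statement's English description precedes it below -/
import Mathlib

section
/- For every integer N ≥ 2, every σ > 0, and all indices 1 ≤ k, l ≤ N, the second moments of the density p_{N,σ} are given by ∫_{ℝ^N} x_k x_l p_{N,σ}(x) dx = 1 + (σ^2 - 1)/N when k = l, and ∫_{ℝ^N} x_k x_l p_{N,σ}(x) dx = (σ^2 - 1)/N when k ≠ l. -/
/-!
With `t = (σ - 1) / N`, the matrix `A = 1 + t J` (`J` the all-ones matrix) has
`det A = 1 + N t = σ`, and `σ · p_{N,σ}(A z)` is the standard Gaussian density of `z`: the pairwise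
terms of `p_{N,σ}` only see `N ‖x‖² - (∑ x)²`, and the shift by `t ∑ z` is chosen so that the cross
terms cancel. Hence `x` is the image of a standard Gaussian vector under `A`, and its second
moments are the entries of `A Aᵀ = 1 + (2t + N t²) J = 1 + ((σ² - 1) / N) J`.
-/

open MeasureTheory Real Finset Filter

/-- The `N`-variate normal density
`p_{N,σ}(x) = σ⁻¹ (2π)^{-N/2} ∏_{k<l} exp(-(1/(2N))(1-σ⁻²)(x_k-x_l)²) ∏_n exp(-x_n²/(2σ²))`. -/
noncomputable def pdensity (N : ℕ) (σ : ℝ) (x : Fin N → ℝ) : ℝ :=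
  σ⁻¹ * (2 * π) ^ (-(N : ℝ) / 2) *
    (∏ k : Fin N, ∏ l ∈ Finset.univ.filter (fun l => k < l),
      Real.exp (-(1 / (2 * (N : ℝ))) * (1 - (σ ^ 2)⁻¹) * (x k - x l) ^ 2)) *
    ∏ n : Fin N, Real.exp (-(x n) ^ 2 / (2 * σ ^ 2))

open ProbabilityTheory Matrix

lemma sum_sum_eq_two_nsmul_sum_sum_filter_lt {ι M : Type*} [Fintype ι] [LinearOrder ι]
    [AddCommMonoid M] (f : ι → ι → M) (hsymm : ∀ k l, f k l = f l k) (hdiag : ∀ k, f k k = 0) :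
    ∑ k, ∑ l, f k l = 2 • ∑ k, ∑ l with k < l, f k l := by
  have split : ∀ k l, f k l = (if k < l then f k l else 0) + (if l < k then f l k else 0) := by
    intro k l
    rcases lt_trichotomy k l with h | rfl | h
    · simp [h, h.not_gt]
    · simp [hdiag]
    · simp [h, h.not_gt, hsymm k l]
  calc ∑ k, ∑ l, f k l
      = ∑ k, ∑ l, (if k < l then f k l else 0) + ∑ k, ∑ l, (if l < k then f l k else 0) := by
        simp only [← sum_add_distrib, ← split]
    _ = 2 • ∑ k, ∑ l with k < l, f k l := by
        rw [sum_comm (f := fun k l => if l < k then f l k else 0)]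
        simp only [sum_filter, two_nsmul]

lemma sum_sum_filter_lt_sub_sq {ι : Type*} [Fintype ι] [LinearOrder ι] (x : ι → ℝ) :
    ∑ k, ∑ l with k < l, (x k - x l) ^ 2 = Fintype.card ι * ∑ i, x i ^ 2 - (∑ i, x i) ^ 2 := by
  have hfull :
      ∑ k, ∑ l, (x k - x l) ^ 2 = 2 * (Fintype.card ι * ∑ i, x i ^ 2 - (∑ i, x i) ^ 2) := by
    simp only [sub_sq, sum_add_distrib, sum_sub_distrib, sum_const, card_univ, nsmul_eq_mul,
      ← mul_sum, ← sum_mul]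
    ring
  rw [sum_sum_eq_two_nsmul_sum_sum_filter_lt _ (fun k l => by ring) (fun k => by ring),
    two_nsmul] at hfull
  linarith

lemma rpow_neg_natCast_div_two {x : ℝ} (hx : 0 ≤ x) (n : ℕ) :
    x ^ (-(n : ℝ) / 2) = (√x)⁻¹ ^ n := by
  rw [sqrt_eq_rpow, ← rpow_neg hx, ← rpow_natCast, ← rpow_mul hx]
  ring_nf

lemma integrable_pow_mul_gaussianPDFReal (n : ℕ) :
    Integrable fun x : ℝ => x ^ n * gaussianPDFReal 0 1 x := by
  refine ((integrable_rpow_mul_exp_neg_mul_sq (b := 1 / 2) (by norm_num)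
    (s := n) (by linarith [n.cast_nonneg (α := ℝ)])).const_mul (√(2 * π))⁻¹).congr
    (ae_of_all _ fun x => ?_)
  simp only [gaussianPDFReal, rpow_natCast, NNReal.coe_one, mul_one, sub_zero]
  ring_nf

lemma integral_mul_gaussianPDFReal : ∫ x : ℝ, x * gaussianPDFReal 0 1 x = 0 := by
  simpa [integral_gaussianReal_eq_integral_smul, mul_comm] using
    integral_id_gaussianReal (μ := 0) (v := 1)

lemma integral_sq_mul_gaussianPDFReal : ∫ x : ℝ, x ^ 2 * gaussianPDFReal 0 1 x = 1 := by
  have h := variance_fun_id_gaussianReal (μ := 0) (v := 1)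
  rw [variance_eq_integral measurable_id'.aemeasurable, integral_id_gaussianReal,
    integral_gaussianReal_eq_integral_smul one_ne_zero] at h
  simpa [mul_comm] using h

section

variable {ι : Type*} [Fintype ι]

noncomputable def stdGaussianPDF (z : ι → ℝ) : ℝ := ∏ i, gaussianPDFReal 0 1 (z i)

lemma stdGaussianPDF_eq (z : ι → ℝ) :
    stdGaussianPDF z = (√(2 * π))⁻¹ ^ Fintype.card ι * exp (-(∑ i, z i ^ 2) / 2) := by
  simp [stdGaussianPDF, gaussianPDFReal, prod_mul_distrib, ← exp_sum, sum_div, neg_div]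

variable [DecidableEq ι]

lemma mul_mul_stdGaussianPDF_eq_prod (a b : ι) (z : ι → ℝ) :
    z a * z b * stdGaussianPDF z =
      ∏ i, z i ^ (Pi.single a 1 + Pi.single b 1 : ι → ℕ) i * gaussianPDFReal 0 1 (z i) := by
  rw [stdGaussianPDF, prod_mul_distrib]
  congr 1
  simp only [Pi.add_apply, pow_add, prod_mul_distrib, Pi.single_apply, pow_ite, pow_one, pow_zero,
    prod_ite_eq', mem_univ, if_true]

lemma integrable_mul_mul_stdGaussianPDF (a b : ι) :
    Integrable fun z : ι → ℝ => z a * z b * stdGaussianPDF z := by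
  simp_rw [mul_mul_stdGaussianPDF_eq_prod]
  exact Integrable.fintype_prod (f := fun i x => x ^ _ * gaussianPDFReal 0 1 x)
    fun i => integrable_pow_mul_gaussianPDFReal _

lemma integral_mul_mul_stdGaussianPDF (a b : ι) :
    ∫ z : ι → ℝ, z a * z b * stdGaussianPDF z = if a = b then 1 else 0 := by
  simp_rw [mul_mul_stdGaussianPDF_eq_prod]
  rw [integral_fintype_prod_volume_eq_prod (f := fun i x => x ^ _ * gaussianPDFReal 0 1 x)]
  split_ifs with hab
  · subst hab
    refine prod_eq_one fun i _ => ?_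
    by_cases hi : i = a
    · simp [hi, integral_sq_mul_gaussianPDFReal]
    · simp [hi, integral_gaussianPDFReal_eq_one]
  · refine prod_eq_zero (mem_univ a) ?_
    simp [hab, integral_mul_gaussianPDFReal]

lemma integral_mulVec_mul_mulVec_mul_stdGaussianPDF {κ : Type*} (M : Matrix κ ι ℝ) (k l : κ) :
    ∫ z : ι → ℝ, (M *ᵥ z) k * (M *ᵥ z) l * stdGaussianPDF z = (M * Mᵀ) k l := by
  have expand : ∀ z : ι → ℝ, (M *ᵥ z) k * (M *ᵥ z) l * stdGaussianPDF z =
      ∑ i, ∑ j, M k i * M l j * (z i * z j * stdGaussianPDF z) := fun z => by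
    rw [mulVec, mulVec, dotProduct, dotProduct, sum_mul_sum, sum_mul]
    exact sum_congr rfl fun i _ => by rw [sum_mul]; exact sum_congr rfl fun j _ => by ring
  simp_rw [expand]
  rw [integral_finsetSum _ fun i _ => integrable_finsetSum _ fun j _ =>
    (integrable_mul_mul_stdGaussianPDF i j).const_mul _]
  simp_rw [integral_finsetSum _ fun j _ => (integrable_mul_mul_stdGaussianPDF _ j).const_mul _,
    integral_const_mul, integral_mul_mul_stdGaussianPDF]
  simp [mul_apply]

lemma integral_eq_abs_det_mul_integral_comp_mulVec {E : Type*} [NormedAddCommGroup E]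
    [NormedSpace ℝ E] (M : Matrix ι ι ℝ) (hM : M.det ≠ 0) (f : (ι → ℝ) → E) :
    ∫ x, f x = |M.det| • ∫ z, f (M *ᵥ z) := by
  have hemb : MeasurableEmbedding (toLin' M) :=
    (M.toLinearEquiv' (M.invertibleOfIsUnitDet hM.isUnit)).toContinuousLinearEquiv.toHomeomorph
      |>.measurableEmbedding
  change _ = _ • ∫ z, f (toLin' M z)
  rw [← hemb.integral_map, Real.map_matrix_volume_pi_eq_smul_volume_pi hM, integral_smul_measure,
    smul_smul, ENNReal.toReal_ofReal (abs_nonneg _), abs_inv, mul_inv_cancel₀ (abs_ne_zero.2 hM),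
    one_smul]

variable (ι) in
noncomputable def oneAddConst (t : ℝ) : Matrix ι ι ℝ := 1 + vecMulVec (fun _ => t) 1

lemma oneAddConst_mulVec (t : ℝ) (z : ι → ℝ) :
    oneAddConst ι t *ᵥ z = fun i => z i + t * ∑ j, z j := by
  ext i
  simp [oneAddConst, mulVec, dotProduct, add_mul, sum_add_distrib, one_apply, mul_sum]

lemma det_oneAddConst (t : ℝ) : (oneAddConst ι t).det = 1 + Fintype.card ι * t := by
  rw [oneAddConst, vecMulVec_eq Unit, det_one_add_replicateCol_mul_replicateRow]
  simp [dotProduct]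

lemma oneAddConst_mul_transpose_apply (t : ℝ) (k l : ι) :
    (oneAddConst ι t * (oneAddConst ι t)ᵀ) k l =
      (if k = l then 1 else 0) + (2 * t + Fintype.card ι * t ^ 2) := by
  simp only [oneAddConst, vecMulVec_one, transpose_add, transpose_one, transpose_replicateCol,
    mul_apply, Matrix.add_apply, one_apply, replicateCol_apply, replicateRow_apply, mul_add, mul_ite,
    mul_one, mul_zero, add_mul, ite_mul, one_mul, zero_mul, sum_add_distrib, sum_ite_eq', mem_univ,
    if_true, sum_ite_eq, sum_const, card_univ, nsmul_eq_mul]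
  ring

end

lemma pdensity_eq_exp {N : ℕ} (σ : ℝ) (x : Fin N → ℝ) :
    pdensity N σ x = σ⁻¹ * (2 * π) ^ (-(N : ℝ) / 2) *
      exp (-(1 / (2 * (N : ℝ))) * (1 - (σ ^ 2)⁻¹) * (N * ∑ i, x i ^ 2 - (∑ i, x i) ^ 2) -
        (∑ i, x i ^ 2) / (2 * σ ^ 2)) := by
  have hpairs :
      ∏ k, ∏ l with k < l, exp (-(1 / (2 * (N : ℝ))) * (1 - (σ ^ 2)⁻¹) * (x k - x l) ^ 2) =
        exp (-(1 / (2 * (N : ℝ))) * (1 - (σ ^ 2)⁻¹) * (N * ∑ i, x i ^ 2 - (∑ i, x i) ^ 2)) := by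
    have h := sum_sum_filter_lt_sub_sq x
    rw [Fintype.card_fin] at h
    rw [← h, mul_sum, exp_sum]
    simp_rw [mul_sum, exp_sum]
  have hcoords : ∏ n, exp (-x n ^ 2 / (2 * σ ^ 2)) = exp (-(∑ i, x i ^ 2) / (2 * σ ^ 2)) := by
    rw [← exp_sum, ← sum_div, sum_neg_distrib]
  rw [pdensity, hpairs, hcoords, mul_assoc, ← exp_add]
  congr 2
  ring

lemma pdensity_oneAddConst_mulVec {N : ℕ} {σ : ℝ} (hN : N ≠ 0) (hσ : σ ≠ 0) (z : Fin N → ℝ) :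
    pdensity N σ (oneAddConst (Fin N) ((σ - 1) / N) *ᵥ z) = σ⁻¹ * stdGaussianPDF z := by
  have hexponent : -(1 / (2 * (N : ℝ))) * (1 - (σ ^ 2)⁻¹) *
      (N * ∑ i, (z i + (σ - 1) / N * ∑ j, z j) ^ 2 - (∑ i, (z i + (σ - 1) / N * ∑ j, z j)) ^ 2) -
      (∑ i, (z i + (σ - 1) / N * ∑ j, z j) ^ 2) / (2 * σ ^ 2) = -(∑ i, z i ^ 2) / 2 := by
    simp only [add_sq, sum_add_distrib, sum_const, card_univ, Fintype.card_fin, nsmul_eq_mul,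
      ← sum_mul, ← mul_sum]
    field_simp
    ring
  rw [oneAddConst_mulVec, pdensity_eq_exp, hexponent, stdGaussianPDF_eq, Fintype.card_fin,
    rpow_neg_natCast_div_two (by positivity)]
  ring

theorem pdensity_second_moments_general (N : ℕ) (σ : ℝ) (hσ : 0 < σ) (k l : Fin N) :
    (k = l → ∫ x : Fin N → ℝ, x k * x l * pdensity N σ x = 1 + (σ ^ 2 - 1) / (N : ℝ)) ∧
    (k ≠ l → ∫ x : Fin N → ℝ, x k * x l * pdensity N σ x = (σ ^ 2 - 1) / (N : ℝ)) := by
  have hN : N ≠ 0 := k.pos.ne'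
  set A := oneAddConst (Fin N) ((σ - 1) / N) with hA
  have hdet : A.det = σ := by
    rw [hA, det_oneAddConst, Fintype.card_fin]
    field_simp
    ring
  have hmoment : ∫ x : Fin N → ℝ, x k * x l * pdensity N σ x =
      (if k = l then 1 else 0) + (σ ^ 2 - 1) / N := calc
    _ = σ * ∫ z, (A *ᵥ z) k * (A *ᵥ z) l * pdensity N σ (A *ᵥ z) := by
      rw [integral_eq_abs_det_mul_integral_comp_mulVec A (hdet ▸ hσ.ne'), hdet, abs_of_pos hσ,
        smul_eq_mul]
    _ = ∫ z, (A *ᵥ z) k * (A *ᵥ z) l * stdGaussianPDF z := by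
      rw [← integral_const_mul]
      congr 1 with z
      rw [hA, pdensity_oneAddConst_mulVec hN hσ.ne']
      field_simp
    _ = (A * Aᵀ) k l := integral_mulVec_mul_mulVec_mul_stdGaussianPDF A k l
    _ = (if k = l then 1 else 0) + (σ ^ 2 - 1) / N := by
      rw [hA, oneAddConst_mul_transpose_apply, Fintype.card_fin]
      field_simp
      ring
  exact ⟨fun h => by rw [hmoment, if_pos h], fun h => by rw [hmoment, if_neg h, zero_add]⟩

/-- Second moments of `p_{N,σ}`: `∫ x_k x_l p_{N,σ} = 1 + (σ²-1)/N` if `k = l`, and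
`(σ²-1)/N` if `k ≠ l`. -/
theorem pdensity_second_moments (N : ℕ) (hN : 2 ≤ N) (σ : ℝ) (hσ : 0 < σ) (k l : Fin N) :
    (k = l → ∫ x : Fin N → ℝ, x k * x l * pdensity N σ x = 1 + (σ ^ 2 - 1) / (N : ℝ)) ∧
    (k ≠ l → ∫ x : Fin N → ℝ, x k * x l * pdensity N σ x = (σ ^ 2 - 1) / (N : ℝ)) :=
  pdensity_second_moments_general N σ hσ k l
end

section
/- Let z ∈ ℝ and σ > 0. For every admissible density ν on ℝ one has liminf_{N→∞} N^{-1} log E_N(z;σ) ≥ 𝒢_{z;σ}(ν); consequently lim_{N→∞} N^{-1} log E_N(z;σ) ≥ sup over admissible ν of 𝒢_{z;σ}(ν). -/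
open MeasureTheory Real Finset Filter

/-- The expected polynomial `E_N(z;σ)` for real `z` (a positive real number).  For `N = 1`
the product over pairs `k < l` in `pdensity` is empty, so this agrees with the
one-dimensional formula `σ⁻¹(2π)^{-1/2} ∫ (x² + z²) exp(-x²/(2σ²)) dx`. -/
noncomputable def ENr (N : ℕ) (σ : ℝ) (z : ℝ) : ℝ :=
  ∫ x : Fin N → ℝ, (∏ n : Fin N, ((x n) ^ 2 + z ^ 2)) * pdensity N σ x

/-- The one-dimensional centered normal density with variance `σ²`. -/
noncomputable def nuSigma (σ : ℝ) (x : ℝ) : ℝ :=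
  (Real.sqrt (2 * π) * σ)⁻¹ * Real.exp (-x ^ 2 / (2 * σ ^ 2))

/-- A density `ν : ℝ → ℝ` is admissible for `(z,σ)` if it is a probability density with
finite second moment, finite relative entropy w.r.t. `ν_σ`, and integrable against
`log(σ(x² + z²))`. -/
def Admissible (z σ : ℝ) (ν : ℝ → ℝ) : Prop :=
  Measurable ν ∧ (∀ᵐ x : ℝ, 0 ≤ ν x) ∧ (∫ x : ℝ, ν x) = 1 ∧
    Integrable (fun x : ℝ => x ^ 2 * ν x) ∧
    Integrable (fun x : ℝ => ν x * Real.log (ν x / nuSigma σ x)) ∧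
    Integrable (fun x : ℝ => ν x * Real.log (σ * (x ^ 2 + z ^ 2)))

/-- The mean-field free-energy functional `𝒢_{z;σ}(ν)`. -/
noncomputable def Gfun (z σ : ℝ) (ν : ℝ → ℝ) : ℝ :=
  -(∫ x : ℝ, ν x * Real.log (ν x / nuSigma σ x)) +
    (∫ x : ℝ, ν x * Real.log (σ * (x ^ 2 + z ^ 2))) -
    (σ ^ 2 - 1) / (4 * σ ^ 2) * ∫ x₁ : ℝ, ∫ x₂ : ℝ, ν x₁ * ν x₂ * (x₁ - x₂) ^ 2

open scoped ENNReal NNReal Topology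

namespace LGEN


lemma sum_pairs_two {N : ℕ} (g : Fin N → Fin N → ℝ)
    (hsymm : ∀ k l, g k l = g l k) (hdiag : ∀ k, g k k = 0) :
    2 * (∑ k, ∑ l ∈ Finset.univ.filter (fun l => k < l), g k l) = ∑ k, ∑ l, g k l := by
  have key : ∀ k : Fin N, ∑ l, g k l =
      (∑ l ∈ Finset.univ.filter (fun l => k < l), g k l) +
      (∑ l ∈ Finset.univ.filter (fun l => l < k), g k l) := by
    intro k
    rw [← Finset.sum_filter_add_sum_filter_not Finset.univ (fun l => k < l) (g k)]
    congr 1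
    rw [← Finset.sum_filter_add_sum_filter_not (Finset.univ.filter (fun l => ¬ k < l))
      (fun l => l < k) (g k), Finset.filter_filter, Finset.filter_filter]
    
    have h2 : Finset.univ.filter (fun l : Fin N => ¬ k < l ∧ ¬ l < k) = {k} := by
      ext l; simp [not_lt, le_antisymm_iff, eq_comm, and_comm]
    have h1 : Finset.univ.filter (fun l : Fin N => ¬ k < l ∧ l < k)
        = Finset.univ.filter (fun l : Fin N => l < k) := by
      apply Finset.filter_congr; intro l _
      constructor
      · rintro ⟨-, h⟩; exact h
      · intro h; exact ⟨not_lt.mpr h.le, h⟩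
    rw [h1, h2, Finset.sum_singleton, hdiag, add_zero]
  have swap : ∑ k, ∑ l ∈ Finset.univ.filter (fun l => l < k), g k l
      = ∑ k, ∑ l ∈ Finset.univ.filter (fun l => k < l), g k l := by
    simp_rw [Finset.sum_filter]
    rw [Finset.sum_comm]
    congr 1; ext k; congr 1; ext l
    by_cases h : k < l <;> simp [h, hsymm k l]
  calc 2 * (∑ k, ∑ l ∈ Finset.univ.filter (fun l => k < l), g k l)
      = (∑ k, ∑ l ∈ Finset.univ.filter (fun l => k < l), g k l)
        + (∑ k, ∑ l ∈ Finset.univ.filter (fun l => l < k), g k l) := by rw [swap]; ring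
    _ = ∑ k, ∑ l, g k l := by rw [← Finset.sum_add_distrib]; exact (Finset.sum_congr rfl
        fun k _ => (key k).symm)

lemma double_sum_sub_sq {N : ℕ} (x : Fin N → ℝ) :
    ∑ k, ∑ l, (x k - x l)^2 = 2*N*(∑ k, (x k)^2) - 2*(∑ k, x k)^2 := by
  have h1 : ∀ k : Fin N, ∑ l, (x k - x l)^2
      = N * (x k)^2 - 2 * (x k * ∑ l, x l) + ∑ l, (x l)^2 := by
    intro k
    have : ∀ l : Fin N, (x k - x l)^2 = (x k)^2 - 2*(x k * x l) + (x l)^2 := fun l => by ring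
    simp_rw [this, Finset.sum_add_distrib, Finset.sum_sub_distrib, Finset.sum_const,
      Finset.card_univ, Fintype.card_fin, nsmul_eq_mul, ← Finset.mul_sum]
  simp_rw [h1, Finset.sum_add_distrib, Finset.sum_sub_distrib, Finset.sum_const,
    Finset.card_univ, Fintype.card_fin, nsmul_eq_mul, ← Finset.mul_sum, ← Finset.sum_mul]
  rw [sq (∑ k, x k)]; ring

lemma Spair_le {N : ℕ} (x : Fin N → ℝ) :
    (∑ k, ∑ l ∈ Finset.univ.filter (fun l => k < l), (x k - x l)^2) ≤ N * ∑ k, (x k)^2 := by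
  have h2 := sum_pairs_two (fun k l => (x k - x l)^2) (fun k l => by ring) (fun k => by ring)
  have h3 := double_sum_sub_sq x
  nlinarith [sq_nonneg (∑ k, x k)]

lemma Spair_nonneg {N : ℕ} (x : Fin N → ℝ) :
    0 ≤ ∑ k, ∑ l ∈ Finset.univ.filter (fun l => k < l), (x k - x l)^2 :=
  Finset.sum_nonneg fun k _ => Finset.sum_nonneg fun l _ => sq_nonneg _

lemma count_pairs (N : ℕ) :
    (∑ k : Fin N, ((Finset.univ.filter (fun l => k < l)).card : ℝ)) = N*(N-1)/2 := by
  have h : ∀ k : Fin N, (Finset.univ.filter (fun l => k < l)).card = N - 1 - (k : ℕ) := by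
    intro k
    rw [show Finset.univ.filter (fun l => k < l) = Finset.Ioi k from by ext; simp, Fin.card_Ioi]
  simp_rw [h]
  rcases Nat.eq_zero_or_pos N with hN | hN
  · subst hN; simp
  rw [Fin.sum_univ_eq_sum_range (fun j => ((N - 1 - j : ℕ) : ℝ)) N, ← Finset.sum_range_reflect]
  have hcast : ∀ j ∈ Finset.range N, ((N - 1 - (N - 1 - j) : ℕ) : ℝ) = (j : ℝ) := by
    intro j hj
    have hj' := Finset.mem_range.mp hj
    have : N - 1 - (N - 1 - j) = j := by omega
    rw [this]
  rw [Finset.sum_congr rfl hcast]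
  have h2 := congrArg (fun n : ℕ => (n : ℝ)) (Finset.sum_range_id_mul_two N)
  have h3 : ((N - 1 : ℕ) : ℝ) = (N : ℝ) - 1 := by rw [Nat.cast_sub hN]; norm_num
  push_cast [h3] at h2
  linarith



variable {N : ℕ} {ν : ℝ → ℝ}

lemma prod_single_eq (g : ℝ → ℝ) (n : Fin N) (x : Fin N → ℝ) :
    (∏ m, ν (x m)) * g (x n)
      = ∏ m, (fun m => if m = n then (fun t => ν t * g t) else ν) m (x m) := by
  rw [← Finset.mul_prod_erase Finset.univ (fun m => ν (x m)) (Finset.mem_univ n),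
    ← Finset.mul_prod_erase Finset.univ
      (fun m => (fun m => if m = n then (fun t => ν t * g t) else ν) m (x m)) (Finset.mem_univ n)]
  have h1 : ∀ m ∈ Finset.univ.erase n,
      (fun m => if m = n then (fun t => ν t * g t) else ν) m (x m) = ν (x m) := by
    intro m hm
    simp [Finset.ne_of_mem_erase hm]
  rw [Finset.prod_congr rfl h1]
  simp only [if_pos rfl, if_true]
  ring

lemma single_int (hν : Integrable ν) (h1 : (∫ t, ν t) = 1) (g : ℝ → ℝ)
    (hg : Integrable (fun t => ν t * g t)) (n : Fin N) :
    Integrable (fun x : Fin N → ℝ => (∏ m, ν (x m)) * g (x n)) ∧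
      (∫ x : Fin N → ℝ, (∏ m, ν (x m)) * g (x n)) = ∫ t, ν t * g t := by
  have heq : (fun x : Fin N → ℝ => (∏ m, ν (x m)) * g (x n))
      = fun x => ∏ m, (fun m => if m = n then (fun t => ν t * g t) else ν) m (x m) := by
    funext x; exact prod_single_eq g n x
  have hint : ∀ m : Fin N, Integrable ((fun m => if m = n then (fun t => ν t * g t) else ν) m) := by
    intro m; by_cases h : m = n <;> simp [h, hg, hν]
  constructor
  · rw [heq]; exact Integrable.fintype_prod hint
  · rw [heq, integral_fintype_prod_volume_eq_prod (𝕜 := ℝ)]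
    rw [Finset.prod_eq_single n (fun m _ hm => by simp [hm, h1]) (fun h => absurd (Finset.mem_univ n) h)]
    simp

lemma prod_double_eq (g₁ g₂ : ℝ → ℝ) {k l : Fin N} (hkl : k ≠ l) (x : Fin N → ℝ) :
    (∏ m, ν (x m)) * (g₁ (x k) * g₂ (x l))
      = ∏ m, (fun m => if m = k then (fun t => ν t * g₁ t)
          else if m = l then (fun t => ν t * g₂ t) else ν) m (x m) := by
  set F := fun m => if m = k then (fun t => ν t * g₁ t)
      else if m = l then (fun t => ν t * g₂ t) else ν with hF
  have hlk : l ∈ Finset.univ.erase k := Finset.mem_erase.mpr ⟨Ne.symm hkl, Finset.mem_univ l⟩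
  have expand : ∀ G : ℝ → ℝ, ∀ H : Fin N → ℝ → ℝ, (∀ m, m ≠ k → m ≠ l → H m = G) →
      ∏ m, H m (x m) = H k (x k) * (H l (x l) * ∏ m ∈ (Finset.univ.erase k).erase l, G (x m)) := by
    intro G H hH
    rw [← Finset.mul_prod_erase Finset.univ (fun m => H m (x m)) (Finset.mem_univ k),
      ← Finset.mul_prod_erase (Finset.univ.erase k) (fun m => H m (x m)) hlk]
    congr 1
    congr 1
    refine Finset.prod_congr rfl fun m hm => ?_
    have hm1 := Finset.ne_of_mem_erase hm
    have hm2 := Finset.ne_of_mem_erase (Finset.mem_of_mem_erase hm)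
    rw [hH m hm2 hm1]
  rw [expand ν (fun _ => ν) (fun _ _ _ => rfl),
    expand ν F (fun m h1 h2 => by simp [hF, h1, h2])]
  simp only [hF, if_pos rfl, if_true, if_neg hkl, if_neg (Ne.symm hkl)]
  ring

lemma double_int (hν : Integrable ν) (h1 : (∫ t, ν t) = 1) (g₁ g₂ : ℝ → ℝ)
    (hg₁ : Integrable (fun t => ν t * g₁ t)) (hg₂ : Integrable (fun t => ν t * g₂ t))
    {k l : Fin N} (hkl : k ≠ l) :
    Integrable (fun x : Fin N → ℝ => (∏ m, ν (x m)) * (g₁ (x k) * g₂ (x l))) ∧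
      (∫ x : Fin N → ℝ, (∏ m, ν (x m)) * (g₁ (x k) * g₂ (x l)))
        = (∫ t, ν t * g₁ t) * ∫ t, ν t * g₂ t := by
  set F := fun m => if m = k then (fun t => ν t * g₁ t)
      else if m = l then (fun t => ν t * g₂ t) else ν with hF
  have heq : (fun x : Fin N → ℝ => (∏ m, ν (x m)) * (g₁ (x k) * g₂ (x l)))
      = fun x => ∏ m, F m (x m) := by
    funext x; exact prod_double_eq g₁ g₂ hkl x
  have hint : ∀ m : Fin N, Integrable (F m) := by
    intro m
    by_cases h : m = k
    · simp [hF, h, hg₁]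
    · by_cases h' : m = l <;> simp [hF, h, h', hg₂, hν, Ne.symm hkl]
  constructor
  · rw [heq]; exact Integrable.fintype_prod hint
  · rw [heq, integral_fintype_prod_volume_eq_prod (𝕜 := ℝ)]
    have hlk : l ∈ Finset.univ.erase k := Finset.mem_erase.mpr ⟨Ne.symm hkl, Finset.mem_univ l⟩
    rw [← Finset.mul_prod_erase Finset.univ (fun m => ∫ t, F m t) (Finset.mem_univ k),
      ← Finset.mul_prod_erase (Finset.univ.erase k) (fun m => ∫ t, F m t) hlk]
    have hone : ∀ m ∈ (Finset.univ.erase k).erase l, (∫ t, F m t) = 1 := by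
      intro m hm
      have hm1 := Finset.ne_of_mem_erase hm
      have hm2 := Finset.ne_of_mem_erase (Finset.mem_of_mem_erase hm)
      simp [hF, hm1, hm2, h1]
    rw [Finset.prod_eq_one hone]
    simp [hF, if_pos rfl, if_neg hkl, if_neg (Ne.symm hkl)]



variable {N : ℕ} {σ z : ℝ}

/-- exponent sum -/
noncomputable def Sexp (N : ℕ) (σ : ℝ) (x : Fin N → ℝ) : ℝ :=
  (∑ k : Fin N, ∑ l ∈ Finset.univ.filter (fun l => k < l),
    (-(1 / (2 * (N : ℝ))) * (1 - (σ ^ 2)⁻¹) * (x k - x l) ^ 2)) +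
  ∑ m : Fin N, (-(x m) ^ 2 / (2 * σ ^ 2))

lemma pdensity_eq (x : Fin N → ℝ) :
    pdensity N σ x = σ⁻¹ * (2 * π) ^ (-(N : ℝ) / 2) * Real.exp (Sexp N σ x) := by
  unfold pdensity Sexp
  rw [Real.exp_add, Real.exp_sum, mul_assoc]
  congr 2
  · exact Finset.prod_congr rfl fun k _ => (Real.exp_sum _ _).symm
  · exact (Real.exp_sum _ _).symm

lemma Sexp_le (hσ : 0 < σ) (hN : 1 ≤ N) (x : Fin N → ℝ) :
    Sexp N σ x ≤ -(min 1 (σ ^ 2)⁻¹ / 2) * ∑ m, (x m) ^ 2 := by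
  have hn : (0:ℝ) < N := by exact_mod_cast hN
  have hσ2 : (0:ℝ) < (σ^2)⁻¹ := by positivity
  have hsum : (0:ℝ) ≤ ∑ m, (x m)^2 := Finset.sum_nonneg fun m _ => sq_nonneg _
  have hpair : (∑ k : Fin N, ∑ l ∈ Finset.univ.filter (fun l => k < l),
      (-(1 / (2 * (N : ℝ))) * (1 - (σ ^ 2)⁻¹) * (x k - x l) ^ 2))
      = (-(1 / (2 * (N : ℝ))) * (1 - (σ ^ 2)⁻¹)) *
        ∑ k : Fin N, ∑ l ∈ Finset.univ.filter (fun l => k < l), (x k - x l) ^ 2 := by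
    simp_rw [Finset.mul_sum]
  have hsq : (∑ m : Fin N, (-(x m) ^ 2 / (2 * σ ^ 2)))
      = -(σ^2)⁻¹/2 * ∑ m, (x m)^2 := by
    rw [Finset.mul_sum]
    exact Finset.sum_congr rfl fun m _ => by rw [div_eq_mul_inv, mul_inv]; ring
  unfold Sexp
  rw [hpair, hsq]
  rcases le_or_gt 0 (1 - (σ^2)⁻¹) with hc | hc
  · have h1 : (-(1 / (2 * (N : ℝ))) * (1 - (σ ^ 2)⁻¹)) *
        (∑ k : Fin N, ∑ l ∈ Finset.univ.filter (fun l => k < l), (x k - x l) ^ 2) ≤ 0 := by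
      apply mul_nonpos_of_nonpos_of_nonneg
      · apply mul_nonpos_of_nonpos_of_nonneg _ hc
        simp only [neg_nonpos]
        positivity
      · exact Spair_nonneg x
    have hmin : min 1 (σ^2)⁻¹ ≤ (σ^2)⁻¹ := min_le_right _ _
    nlinarith
  · have hS := Spair_le x
    have hSn := Spair_nonneg x
    have hcoef : (0:ℝ) < (1 / (2 * (N : ℝ))) * ((σ ^ 2)⁻¹ - 1) := by
      apply mul_pos (by positivity); linarith
    have h1 : (-(1 / (2 * (N : ℝ))) * (1 - (σ ^ 2)⁻¹)) *
        (∑ k : Fin N, ∑ l ∈ Finset.univ.filter (fun l => k < l), (x k - x l) ^ 2)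
        ≤ (1 / (2 * (N : ℝ))) * ((σ ^ 2)⁻¹ - 1) * ((N:ℝ) * ∑ m, (x m)^2) := by
      have : (-(1 / (2 * (N : ℝ))) * (1 - (σ ^ 2)⁻¹)) = (1 / (2 * (N : ℝ))) * ((σ ^ 2)⁻¹ - 1) := by
        ring
      rw [this]
      exact mul_le_mul_of_nonneg_left hS hcoef.le
    have h2 : (1 / (2 * (N : ℝ))) * ((σ ^ 2)⁻¹ - 1) * ((N:ℝ) * ∑ m, (x m)^2)
        = (((σ ^ 2)⁻¹ - 1)/2) * ∑ m, (x m)^2 := by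
      field_simp
    have hmin : min 1 (σ^2)⁻¹ ≤ 1 := min_le_left _ _
    rw [h2] at h1
    nlinarith

theorem keyN (σ z : ℝ) (hσ : 0 < σ) (ν : ℝ → ℝ) (hm : Measurable ν)
    (hpos : ∀ x, 0 ≤ ν x) (hνi : Integrable ν) (h1 : (∫ t, ν t) = 1)
    (hg2 : Integrable fun t => ν t * t ^ 2) (hg1 : Integrable fun t => ν t * t)
    (hglog : Integrable fun t => ν t * Real.log (t ^ 2 + z ^ 2))
    (hgnu : Integrable fun t => ν t * Real.log (ν t))
    (N : ℕ) (hN : 1 ≤ N) :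
    0 < ENr N σ z ∧
    ((N : ℝ) * (∫ t, ν t * Real.log (t ^ 2 + z ^ 2)) - ((N : ℝ) / 2) * Real.log (2 * π)
      - Real.log σ
      - (1 - (σ ^ 2)⁻¹) / (2 * (N : ℝ)) * ((N : ℝ) * ((N : ℝ) - 1) / 2) *
        (2 * (∫ t, ν t * t ^ 2) - 2 * (∫ t, ν t * t) ^ 2)
      - (N : ℝ) * (∫ t, ν t * t ^ 2) / (2 * σ ^ 2)
      - (N : ℝ) * (∫ t, ν t * Real.log (ν t)) ≤ Real.log (ENr N σ z)) ∧
    Real.log (ENr N σ z) ≤ Real.log σ⁻¹ + (-(N : ℝ) / 2) * Real.log (2 * π)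
      + (N : ℝ) * Real.log (∫ t, (t ^ 2 + z ^ 2) * Real.exp (-(min 1 (σ ^ 2)⁻¹ / 2) * t ^ 2)) := by
  have hNpos : (0:ℝ) < (N:ℝ) := by exact_mod_cast hN
  set α := min 1 (σ ^ 2)⁻¹ with hα
  have hαpos : 0 < α := lt_min one_pos (by positivity)
  have hα2 : 0 < α / 2 := by linarith
  set C1 := ∫ t, (t ^ 2 + z ^ 2) * Real.exp (-(α / 2) * t ^ 2) with hC1
  set CN := σ⁻¹ * (2 * π) ^ (-(N : ℝ) / 2) with hCN
  have h2π : (0:ℝ) < 2 * π := by positivity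
  have hCNpos : 0 < CN := mul_pos (by positivity) (Real.rpow_pos_of_pos h2π _)
  set F := fun x : Fin N → ℝ => (∏ m, ((x m) ^ 2 + z ^ 2)) * pdensity N σ x with hF
  have hENr : ENr N σ z = ∫ x, F x := rfl
  have hFeq : ∀ x, F x = CN * ((∏ m, ((x m) ^ 2 + z ^ 2)) * Real.exp (Sexp N σ x)) := by
    intro x
    simp only [hF]
    rw [pdensity_eq]
    ring
  have hFnn : ∀ x, 0 ≤ F x := by
    intro x
    rw [hFeq x]
    have : (0:ℝ) ≤ ∏ m, ((x m) ^ 2 + z ^ 2) := Finset.prod_nonneg fun m _ => by positivity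
    positivity
  have hb1 : Integrable (fun t : ℝ => (t ^ 2 + z ^ 2) * Real.exp (-(α / 2) * t ^ 2)) := by
    have ht2 : Integrable (fun t : ℝ => t ^ 2 * Real.exp (-(α / 2) * t ^ 2)) := by
      have h := integrable_rpow_mul_exp_neg_mul_sq hα2 (s := 2) (by norm_num)
      have heq : (fun t : ℝ => t ^ (2:ℝ) * Real.exp (-(α / 2) * t ^ 2))
          = fun t : ℝ => t ^ 2 * Real.exp (-(α / 2) * t ^ 2) := by
        funext t
        rw [show (2:ℝ) = ((2:ℕ):ℝ) by norm_num, Real.rpow_natCast]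
      rwa [heq] at h
    have hz2 : Integrable (fun t : ℝ => Real.exp (-(α / 2) * t ^ 2) * z ^ 2) :=
      (integrable_exp_neg_mul_sq hα2).mul_const _
    refine (ht2.add hz2).congr (Filter.Eventually.of_forall fun t => ?_)
    simp only [Pi.add_apply]
    ring
  have hC1pos : 0 < C1 := by
    rw [hC1, integral_pos_iff_support_of_nonneg]
    · apply lt_of_lt_of_le _ (measure_mono (Set.Ioi_subset_Ioi (le_refl (0:ℝ)) |>.trans ?_))
      · rw [Real.volume_Ioi]; exact ENNReal.zero_lt_top
      · intro t ht
        have htp : (0:ℝ) < t := ht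
        have : (t ^ 2 + z ^ 2) * Real.exp (-(α / 2) * t ^ 2) ≠ 0 := by positivity
        exact this
    · intro t
      positivity
    · exact hb1
  have hGbint : Integrable
      (fun x : Fin N → ℝ => CN * ∏ m, (((x m) ^ 2 + z ^ 2) * Real.exp (-(α / 2) * (x m) ^ 2))) := by
    exact (Integrable.fintype_prod (𝕜 := ℝ)
      (f := fun _ : Fin N => fun t : ℝ => (t ^ 2 + z ^ 2) * Real.exp (-(α / 2) * t ^ 2))
      (fun _ => hb1)).const_mul CN
  have hFcont : Continuous F := by
    have c1 : Continuous fun x : Fin N → ℝ => ∏ m, ((x m) ^ 2 + z ^ 2) :=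
      continuous_finset_prod _ fun i _ => ((continuous_apply i).pow 2).add continuous_const
    have c2 : Continuous (pdensity N σ) := by
      unfold pdensity
      refine Continuous.mul (Continuous.mul continuous_const ?_) ?_
      · exact continuous_finset_prod _ fun k _ => continuous_finset_prod _ fun l _ =>
          Real.continuous_exp.comp
            (continuous_const.mul (((continuous_apply k).sub (continuous_apply l)).pow 2))
      · exact continuous_finset_prod _ fun n' _ =>
          Real.continuous_exp.comp (((continuous_apply n').pow 2).neg.div_const _)
    simp only [hF]
    exact c1.mul c2
  have hFle : ∀ x, F x ≤ CN * ∏ m, (((x m) ^ 2 + z ^ 2) * Real.exp (-(α / 2) * (x m) ^ 2)) := by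
    intro x
    rw [hFeq x]
    have hs := Sexp_le hσ hN x
    have h1' : Real.exp (Sexp N σ x) ≤ Real.exp (-(α / 2) * ∑ m, (x m) ^ 2) :=
      Real.exp_le_exp.mpr hs
    have hq : (0:ℝ) ≤ ∏ m, ((x m) ^ 2 + z ^ 2) := Finset.prod_nonneg fun m _ => by positivity
    calc CN * ((∏ m, ((x m) ^ 2 + z ^ 2)) * Real.exp (Sexp N σ x))
        ≤ CN * ((∏ m, ((x m) ^ 2 + z ^ 2)) * Real.exp (-(α / 2) * ∑ m, (x m) ^ 2)) := by
          exact mul_le_mul_of_nonneg_left (mul_le_mul_of_nonneg_left h1' hq) hCNpos.le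
      _ = CN * ∏ m, (((x m) ^ 2 + z ^ 2) * Real.exp (-(α / 2) * (x m) ^ 2)) := by
          rw [show (-(α / 2) * ∑ m, (x m) ^ 2) = ∑ m, (-(α / 2) * (x m) ^ 2) from
            Finset.mul_sum _ _ _, Real.exp_sum, ← Finset.prod_mul_distrib]
  have hFint : Integrable F := by
    apply Integrable.mono' hGbint hFcont.aestronglyMeasurable
    filter_upwards with x
    rw [Real.norm_eq_abs, abs_of_nonneg (hFnn x)]
    exact hFle x
  have hIGb : (∫ x : Fin N → ℝ, CN * ∏ m, (((x m) ^ 2 + z ^ 2) * Real.exp (-(α / 2) * (x m) ^ 2)))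
      = CN * C1 ^ N := by
    rw [MeasureTheory.integral_const_mul, integral_fintype_prod_volume_eq_pow (𝕜 := ℝ) (ι := Fin N)
      (f := fun t : ℝ => (t ^ 2 + z ^ 2) * Real.exp (-(α / 2) * t ^ 2))]
    simp [hC1]
  have hEleGb : ENr N σ z ≤ CN * C1 ^ N := by
    rw [hENr, ← hIGb]
    exact integral_mono hFint hGbint hFle
  -- the tilted probability measure
  set dens := fun x : Fin N → ℝ => ∏ m, ν (x m) with hdens
  have hdensnn : ∀ x, 0 ≤ dens x := fun x => Finset.prod_nonneg fun m _ => hpos _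
  have hdensmeas : Measurable dens :=
    Finset.measurable_prod Finset.univ fun m _ => hm.comp (measurable_pi_apply m)
  have htoNN : Measurable fun x => (dens x).toNNReal := measurable_real_toNNReal.comp hdensmeas
  set P := (volume : Measure (Fin N → ℝ)).withDensity (fun x => ((dens x).toNNReal : ℝ≥0∞)) with hP
  have hint_eq : ∀ g : (Fin N → ℝ) → ℝ, (∫ x, g x ∂P) = ∫ x, dens x * g x := by
    intro g
    rw [hP, integral_withDensity_eq_integral_smul htoNN]
    congr 1
    funext x
    simp [NNReal.smul_def, Real.coe_toNNReal _ (hdensnn x)]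
  have hint_iff : ∀ g : (Fin N → ℝ) → ℝ,
      Integrable g P ↔ Integrable (fun x => dens x * g x) := by
    intro g
    rw [hP, integrable_withDensity_iff_integrable_smul htoNN]
    constructor <;> intro hh <;> apply hh.congr <;> filter_upwards with x <;>
      simp [NNReal.smul_def, Real.coe_toNNReal _ (hdensnn x)]
  have hdensint : Integrable dens :=
    Integrable.fintype_prod (𝕜 := ℝ) (f := fun _ : Fin N => ν) fun _ => hνi
  have hdensone : (∫ x, dens x) = 1 := by
    rw [hdens, integral_fintype_prod_volume_eq_prod (𝕜 := ℝ) (ι := Fin N) (f := fun _ : Fin N => ν)]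
    simp [h1]
  have hPprob : IsProbabilityMeasure P := by
    constructor
    rw [hP, withDensity_apply _ MeasurableSet.univ, Measure.restrict_univ]
    have : ∀ x, ((dens x).toNNReal : ℝ≥0∞) = ENNReal.ofReal (dens x) := fun x => rfl
    simp_rw [this]
    rw [← ofReal_integral_eq_lintegral_ofReal hdensint (Filter.Eventually.of_forall hdensnn),
      hdensone]
    simp
  -- absolute continuity and a.e. positivity facts
  have hPac : P ≪ (volume : Measure (Fin N → ℝ)) := withDensity_absolutelyContinuous _ _
  have hae_dens : ∀ᵐ x ∂P, ∀ m, 0 < ν (x m) := by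
    have hms : MeasurableSet {x : Fin N → ℝ | dens x = 0} := hdensmeas (measurableSet_singleton 0)
    have h0 : P {x : Fin N → ℝ | dens x = 0} = 0 := by
      rw [hP, withDensity_apply _ hms]
      have hz0 : ∀ᵐ x ∂(volume.restrict {x : Fin N → ℝ | dens x = 0}),
          ((dens x).toNNReal : ℝ≥0∞) = 0 := by
        filter_upwards [ae_restrict_mem hms] with x hx
        simp [Set.mem_setOf_eq.mp hx]
      rw [lintegral_congr_ae hz0, lintegral_zero]
    have h2 : ∀ᵐ x ∂P, dens x ≠ 0 := by
      rw [ae_iff]; simpa using h0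
    filter_upwards [h2] with x hx m
    rcases (hpos (x m)).lt_or_eq with hlt | heq
    · exact hlt
    · exact absurd (Finset.prod_eq_zero (Finset.mem_univ m) heq.symm) hx
  have hae_z : ∀ᵐ x ∂P, ∀ m, 0 < (x m) ^ 2 + z ^ 2 := by
    by_cases hz : z = 0
    · subst hz
      have hv : ∀ᵐ x : Fin N → ℝ ∂(volume : Measure (Fin N → ℝ)), ∀ m, x m ≠ 0 := by
        rw [ae_all_iff]
        intro m
        have h0 : (volume : Measure (Fin N → ℝ)) {x | x m = 0} = 0 := by
          rw [volume_pi]; exact Measure.pi_hyperplane _ m 0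
        rw [ae_iff]; simpa using h0
      filter_upwards [hv.filter_mono hPac.ae_le] with x hx m
      have h := hx m
      have : 0 < (x m) ^ 2 := lt_of_le_of_ne (sq_nonneg _) (Ne.symm (pow_ne_zero 2 h))
      nlinarith
    · filter_upwards with x m
      have : 0 < z ^ 2 := lt_of_le_of_ne (sq_nonneg _) (Ne.symm (pow_ne_zero 2 hz))
      nlinarith [sq_nonneg (x m)]
  -- the function φ and the a.e. identity for log of the likelihood ratio
  set φ : (Fin N → ℝ) → ℝ := fun x =>
      (∑ m, Real.log ((x m) ^ 2 + z ^ 2)) + (-((N:ℝ) / 2) * Real.log (2 * π)) + Sexp N σ x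
        + (-Real.log σ) + (-(∑ m, Real.log (ν (x m)))) with hφ
  set h : (Fin N → ℝ) → ℝ := fun x => F x / dens x with hh
  have hlCN2 : Real.log CN = Real.log σ⁻¹ + (-(N:ℝ) / 2) * Real.log (2 * π) := by
    rw [hCN, Real.log_mul (inv_ne_zero hσ.ne') (Real.rpow_pos_of_pos h2π _).ne',
      Real.log_rpow h2π]
  have hlogh : ∀ᵐ x ∂P, Real.log (h x) = φ x := by
    filter_upwards [hae_dens, hae_z] with x hx1 hx2
    have hdx : 0 < dens x := Finset.prod_pos fun m _ => hx1 m
    have hPz : 0 < ∏ m, ((x m) ^ 2 + z ^ 2) := Finset.prod_pos fun m _ => hx2 m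
    have hFx : 0 < F x := by
      rw [hFeq x]; positivity
    have hld : Real.log (dens x) = ∑ m, Real.log (ν (x m)) := by
      simp only [hdens]
      exact Real.log_prod fun m _ => (hx1 m).ne'
    have hlPz : Real.log (∏ m, ((x m) ^ 2 + z ^ 2)) = ∑ m, Real.log ((x m) ^ 2 + z ^ 2) :=
      Real.log_prod fun m _ => (hx2 m).ne'
    simp only [hh, hφ]
    rw [Real.log_div hFx.ne' hdx.ne', hFeq x,
      Real.log_mul hCNpos.ne' (mul_pos hPz (Real.exp_pos _)).ne',
      Real.log_mul hPz.ne' (Real.exp_pos _).ne', Real.log_exp, hlPz, hld, hlCN2, Real.log_inv]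
    ring
  -- one-coordinate and two-coordinate integral identities
  have hsingle : ∀ g : ℝ → ℝ, Integrable (fun t => ν t * g t) → ∀ n' : Fin N,
      Integrable (fun x : Fin N → ℝ => dens x * g (x n'))
        ∧ (∫ x : Fin N → ℝ, dens x * g (x n')) = ∫ t, ν t * g t := by
    intro g hg n'
    have hs := single_int (N := N) hνi h1 g hg n'
    constructor
    · simpa only [hdens] using hs.1
    · simpa only [hdens] using hs.2
  have hpairI : ∀ k l : Fin N, k ≠ l →
      Integrable (fun x : Fin N → ℝ => dens x * (x k - x l) ^ 2)
        ∧ (∫ x : Fin N → ℝ, dens x * (x k - x l) ^ 2)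
          = 2 * (∫ t, ν t * t ^ 2) - 2 * (∫ t, ν t * t) ^ 2 := by
    intro k l hkl
    have hdd := double_int (N := N) hνi h1 (fun t => t) (fun t => t) hg1 hg1 hkl
    have hs2k := hsingle (fun t => t ^ 2) hg2 k
    have hs2l := hsingle (fun t => t ^ 2) hg2 l
    have hddI : Integrable (fun x : Fin N → ℝ => dens x * (x k * x l)) := by
      simpa only [hdens] using hdd.1
    have hddV : (∫ x : Fin N → ℝ, dens x * (x k * x l)) = (∫ t, ν t * t) * (∫ t, ν t * t) := by
      simpa only [hdens] using hdd.2
    have heq : (fun x : Fin N → ℝ => dens x * (x k - x l) ^ 2)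
        = fun x => (dens x * (x k) ^ 2 + dens x * (x l) ^ 2) - 2 * (dens x * (x k * x l)) := by
      funext x; ring
    have hsum : Integrable (fun x : Fin N → ℝ => dens x * (x k) ^ 2 + dens x * (x l) ^ 2) :=
      hs2k.1.add hs2l.1
    have h2m : Integrable (fun x : Fin N → ℝ => 2 * (dens x * (x k * x l))) := hddI.const_mul 2
    constructor
    · rw [heq]
      exact hsum.sub h2m
    · rw [heq, integral_sub hsum h2m, integral_add hs2k.1 hs2l.1,
        MeasureTheory.integral_const_mul, hs2k.2, hs2l.2, hddV]
      ring
  -- decompose dens * φ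
  have hsplit : (fun x : Fin N → ℝ => dens x * φ x) = fun x =>
      ((∑ m, dens x * Real.log ((x m) ^ 2 + z ^ 2))
        + (-((N:ℝ) / 2) * Real.log (2 * π)) * dens x)
      + ((∑ k, ∑ l ∈ Finset.univ.filter (fun l => k < l),
            (-(1 / (2 * (N:ℝ))) * (1 - (σ ^ 2)⁻¹)) * (dens x * (x k - x l) ^ 2))
        + (∑ m, (-(1 / (2 * σ ^ 2))) * (dens x * (x m) ^ 2)))
      + ((-Real.log σ) * dens x + (-(∑ m, dens x * Real.log (ν (x m))))) := by
    funext x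
    simp only [hφ, Sexp]
    have e1 : dens x * (∑ m, Real.log ((x m) ^ 2 + z ^ 2))
        = ∑ m, dens x * Real.log ((x m) ^ 2 + z ^ 2) := Finset.mul_sum _ _ _
    have e2 : dens x * (∑ k, ∑ l ∈ Finset.univ.filter (fun l => k < l),
          (-(1 / (2 * (N:ℝ))) * (1 - (σ ^ 2)⁻¹) * (x k - x l) ^ 2))
        = ∑ k, ∑ l ∈ Finset.univ.filter (fun l => k < l),
            (-(1 / (2 * (N:ℝ))) * (1 - (σ ^ 2)⁻¹)) * (dens x * (x k - x l) ^ 2) := by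
      rw [Finset.mul_sum]
      refine Finset.sum_congr rfl fun k _ => ?_
      rw [Finset.mul_sum]
      exact Finset.sum_congr rfl fun l _ => by ring
    have e3 : dens x * (∑ m, (-(x m) ^ 2 / (2 * σ ^ 2)))
        = ∑ m, (-(1 / (2 * σ ^ 2))) * (dens x * (x m) ^ 2) := by
      rw [Finset.mul_sum]
      exact Finset.sum_congr rfl fun m _ => by ring
    have e4 : dens x * (∑ m, Real.log (ν (x m))) = ∑ m, dens x * Real.log (ν (x m)) :=
      Finset.mul_sum _ _ _
    linear_combination e1 + e2 + e3 - e4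
  -- integrability and value of each part
  have hI1 : Integrable (fun x : Fin N → ℝ => ∑ m, dens x * Real.log ((x m) ^ 2 + z ^ 2)) :=
    integrable_finset_sum _ fun m _ => (hsingle _ hglog m).1
  have hI1v : (∫ x : Fin N → ℝ, ∑ m, dens x * Real.log ((x m) ^ 2 + z ^ 2))
      = (N:ℝ) * ∫ t, ν t * Real.log (t ^ 2 + z ^ 2) := by
    rw [integral_finset_sum _ fun m _ => (hsingle _ hglog m).1]
    simp only [fun m : Fin N => (hsingle _ hglog m).2]
    rw [Finset.sum_const, Finset.card_univ, Fintype.card_fin, nsmul_eq_mul]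
  have hI2 : Integrable (fun x : Fin N → ℝ => (-((N:ℝ) / 2) * Real.log (2 * π)) * dens x) :=
    hdensint.const_mul _
  have hI2v : (∫ x : Fin N → ℝ, (-((N:ℝ) / 2) * Real.log (2 * π)) * dens x)
      = -((N:ℝ) / 2) * Real.log (2 * π) := by
    rw [MeasureTheory.integral_const_mul, hdensone, mul_one]
  have hI3 : Integrable (fun x : Fin N → ℝ => ∑ k, ∑ l ∈ Finset.univ.filter (fun l => k < l),
      (-(1 / (2 * (N:ℝ))) * (1 - (σ ^ 2)⁻¹)) * (dens x * (x k - x l) ^ 2)) :=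
    integrable_finset_sum _ fun k _ => integrable_finset_sum _ fun l hl =>
      ((hpairI k l (ne_of_lt (Finset.mem_filter.mp hl).2)).1.const_mul _)
  have hI3v : (∫ x : Fin N → ℝ, ∑ k, ∑ l ∈ Finset.univ.filter (fun l => k < l),
      (-(1 / (2 * (N:ℝ))) * (1 - (σ ^ 2)⁻¹)) * (dens x * (x k - x l) ^ 2))
      = ((N:ℝ) * ((N:ℝ) - 1) / 2) * ((-(1 / (2 * (N:ℝ))) * (1 - (σ ^ 2)⁻¹)) *
          (2 * (∫ t, ν t * t ^ 2) - 2 * (∫ t, ν t * t) ^ 2)) := by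
    rw [integral_finset_sum _ fun k _ => integrable_finset_sum _ fun l hl =>
      ((hpairI k l (ne_of_lt (Finset.mem_filter.mp hl).2)).1.const_mul _)]
    have : ∀ k : Fin N, (∫ x : Fin N → ℝ, ∑ l ∈ Finset.univ.filter (fun l => k < l),
        (-(1 / (2 * (N:ℝ))) * (1 - (σ ^ 2)⁻¹)) * (dens x * (x k - x l) ^ 2))
        = ((Finset.univ.filter (fun l => k < l)).card : ℝ) *
          ((-(1 / (2 * (N:ℝ))) * (1 - (σ ^ 2)⁻¹)) *
            (2 * (∫ t, ν t * t ^ 2) - 2 * (∫ t, ν t * t) ^ 2)) := by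
      intro k
      rw [integral_finset_sum _ fun l hl =>
        ((hpairI k l (ne_of_lt (Finset.mem_filter.mp hl).2)).1.const_mul _)]
      have hterm : ∀ l ∈ Finset.univ.filter (fun l => k < l),
          (∫ x : Fin N → ℝ, (-(1 / (2 * (N:ℝ))) * (1 - (σ ^ 2)⁻¹)) * (dens x * (x k - x l) ^ 2))
          = (-(1 / (2 * (N:ℝ))) * (1 - (σ ^ 2)⁻¹)) *
              (2 * (∫ t, ν t * t ^ 2) - 2 * (∫ t, ν t * t) ^ 2) := by
        intro l hl
        rw [MeasureTheory.integral_const_mul, (hpairI k l (ne_of_lt (Finset.mem_filter.mp hl).2)).2]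
      rw [Finset.sum_congr rfl hterm, Finset.sum_const, nsmul_eq_mul]
    rw [Finset.sum_congr rfl fun k _ => this k, ← Finset.sum_mul, count_pairs]
  have hI4 : Integrable (fun x : Fin N → ℝ => ∑ m, (-(1 / (2 * σ ^ 2))) * (dens x * (x m) ^ 2)) :=
    integrable_finset_sum _ fun m _ => ((hsingle _ hg2 m).1.const_mul _)
  have hI4v : (∫ x : Fin N → ℝ, ∑ m, (-(1 / (2 * σ ^ 2))) * (dens x * (x m) ^ 2))
      = (N:ℝ) * ((-(1 / (2 * σ ^ 2))) * ∫ t, ν t * t ^ 2) := by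
    rw [integral_finset_sum _ fun m _ => ((hsingle _ hg2 m).1.const_mul _)]
    have : ∀ m : Fin N, (∫ x : Fin N → ℝ, (-(1 / (2 * σ ^ 2))) * (dens x * (x m) ^ 2))
        = (-(1 / (2 * σ ^ 2))) * ∫ t, ν t * t ^ 2 := by
      intro m
      rw [MeasureTheory.integral_const_mul, (hsingle _ hg2 m).2]
    rw [Finset.sum_congr rfl fun m _ => this m, Finset.sum_const, Finset.card_univ,
      Fintype.card_fin, nsmul_eq_mul]
  have hI5 : Integrable (fun x : Fin N → ℝ => (-Real.log σ) * dens x) := hdensint.const_mul _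
  have hI5v : (∫ x : Fin N → ℝ, (-Real.log σ) * dens x) = -Real.log σ := by
    rw [MeasureTheory.integral_const_mul, hdensone, mul_one]
  have hI6 : Integrable (fun x : Fin N → ℝ => -(∑ m, dens x * Real.log (ν (x m)))) :=
    (integrable_finset_sum _ fun m _ => (hsingle _ hgnu m).1).neg
  have hI6v : (∫ x : Fin N → ℝ, -(∑ m, dens x * Real.log (ν (x m))))
      = -((N:ℝ) * ∫ t, ν t * Real.log (ν t)) := by
    rw [integral_neg, integral_finset_sum _ fun m _ => (hsingle _ hgnu m).1]
    simp only [fun m : Fin N => (hsingle _ hgnu m).2]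
    rw [Finset.sum_const, Finset.card_univ, Fintype.card_fin, nsmul_eq_mul]
  have hE12 : Integrable (fun x : Fin N → ℝ =>
      (∑ m, dens x * Real.log ((x m) ^ 2 + z ^ 2))
        + (-((N:ℝ) / 2) * Real.log (2 * π)) * dens x) := hI1.add hI2
  have hE34 : Integrable (fun x : Fin N → ℝ =>
      (∑ k, ∑ l ∈ Finset.univ.filter (fun l => k < l),
          (-(1 / (2 * (N:ℝ))) * (1 - (σ ^ 2)⁻¹)) * (dens x * (x k - x l) ^ 2))
        + (∑ m, (-(1 / (2 * σ ^ 2))) * (dens x * (x m) ^ 2))) := hI3.add hI4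
  have hE56 : Integrable (fun x : Fin N → ℝ =>
      (-Real.log σ) * dens x + (-(∑ m, dens x * Real.log (ν (x m))))) := hI5.add hI6
  have hE1234 : Integrable (fun x : Fin N → ℝ =>
      ((∑ m, dens x * Real.log ((x m) ^ 2 + z ^ 2))
        + (-((N:ℝ) / 2) * Real.log (2 * π)) * dens x)
      + ((∑ k, ∑ l ∈ Finset.univ.filter (fun l => k < l),
            (-(1 / (2 * (N:ℝ))) * (1 - (σ ^ 2)⁻¹)) * (dens x * (x k - x l) ^ 2))
        + (∑ m, (-(1 / (2 * σ ^ 2))) * (dens x * (x m) ^ 2)))) := hE12.add hE34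
  have hφdensint : Integrable (fun x => dens x * φ x) := by
    rw [hsplit]
    exact hE1234.add hE56
  have hφdensval : (∫ x, dens x * φ x)
      = ((N:ℝ) * (∫ t, ν t * Real.log (t ^ 2 + z ^ 2)) + (-((N:ℝ) / 2) * Real.log (2 * π)))
        + (((N:ℝ) * ((N:ℝ) - 1) / 2) * ((-(1 / (2 * (N:ℝ))) * (1 - (σ ^ 2)⁻¹)) *
            (2 * (∫ t, ν t * t ^ 2) - 2 * (∫ t, ν t * t) ^ 2))
          + (N:ℝ) * ((-(1 / (2 * σ ^ 2))) * ∫ t, ν t * t ^ 2))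
        + (-Real.log σ + -((N:ℝ) * ∫ t, ν t * Real.log (ν t))) := by
    rw [hsplit, integral_add hE1234 hE56, integral_add hE12 hE34, integral_add hI1 hI2,
      integral_add hI3 hI4, integral_add hI5 hI6, hI1v, hI2v, hI3v, hI4v, hI5v, hI6v]
  have hφPint : Integrable φ P := (hint_iff φ).mpr hφdensint
  have hφPval : (∫ x, φ x ∂P) = ∫ x, dens x * φ x := hint_eq φ
  -- Jensen's inequality
  have hhd_nn : ∀ x, 0 ≤ dens x * h x := fun x =>
    mul_nonneg (hdensnn x) (div_nonneg (hFnn x) (hdensnn x))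
  have hhd_le : ∀ x, dens x * h x ≤ F x := by
    intro x
    rcases (hdensnn x).lt_or_eq with hd | hd
    · simp only [hh]
      rw [mul_comm, div_mul_cancel₀ _ hd.ne']
    · rw [← hd, zero_mul]
      exact hFnn x
  have hhdint : Integrable (fun x => dens x * h x) := by
    apply Integrable.mono' hFint
    · exact (hdensmeas.mul (hFcont.measurable.div hdensmeas)).aestronglyMeasurable
    · filter_upwards with x
      rw [Real.norm_eq_abs, abs_of_nonneg (hhd_nn x)]
      exact hhd_le x
  have hhP : Integrable h P := (hint_iff h).mpr hhdint
  have hhpos : ∀ᵐ x ∂P, 0 < h x := by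
    filter_upwards [hae_dens, hae_z] with x hx1 hx2
    have hdx : 0 < dens x := Finset.prod_pos fun m _ => hx1 m
    have hFx : 0 < F x := by
      rw [hFeq x]
      have hPz : 0 < ∏ m, ((x m) ^ 2 + z ^ 2) := Finset.prod_pos fun m _ => hx2 m
      positivity
    exact div_pos hFx hdx
  have hintlogh : Integrable (fun x => Real.log (h x)) P :=
    hφPint.congr (hlogh.mono fun x hx => hx.symm)
  have hexpint : Integrable (fun x => Real.exp (Real.log (h x))) P :=
    hhP.congr (hhpos.mono fun x hx => (Real.exp_log hx).symm)
  have hJ : Real.exp (∫ x, Real.log (h x) ∂P) ≤ ∫ x, Real.exp (Real.log (h x)) ∂P :=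
    convexOn_exp.map_integral_le Real.continuous_exp.continuousOn isClosed_univ
      (Filter.Eventually.of_forall fun x => Set.mem_univ _) hintlogh hexpint
  have hIhP : (∫ x, h x ∂P) ≤ ENr N σ z := by
    rw [hint_eq h, hENr]
    exact integral_mono hhdint hFint hhd_le
  have hE2 : Real.exp (∫ x, Real.log (h x) ∂P) ≤ ENr N σ z := by
    refine le_trans (le_trans hJ (le_of_eq ?_)) hIhP
    exact integral_congr_ae (hhpos.mono fun x hx => Real.exp_log hx)
  have hEpos : 0 < ENr N σ z := lt_of_lt_of_le (Real.exp_pos _) hE2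
  have hlow : (∫ x, Real.log (h x) ∂P) ≤ Real.log (ENr N σ z) :=
    (Real.le_log_iff_exp_le hEpos).mpr hE2
  have hlogval : (∫ x, Real.log (h x) ∂P) = ∫ x, dens x * φ x := by
    rw [integral_congr_ae hlogh, hφPval]
  refine ⟨hEpos, ?_, ?_⟩
  · have hLHS : (N : ℝ) * (∫ t, ν t * Real.log (t ^ 2 + z ^ 2)) - ((N : ℝ) / 2) * Real.log (2 * π)
        - Real.log σ
        - (1 - (σ ^ 2)⁻¹) / (2 * (N : ℝ)) * ((N : ℝ) * ((N : ℝ) - 1) / 2) *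
          (2 * (∫ t, ν t * t ^ 2) - 2 * (∫ t, ν t * t) ^ 2)
        - (N : ℝ) * (∫ t, ν t * t ^ 2) / (2 * σ ^ 2)
        - (N : ℝ) * (∫ t, ν t * Real.log (ν t)) = ∫ x, dens x * φ x := by
      rw [hφdensval]; ring
    rw [hLHS, ← hlogval]
    exact hlow
  · have hC1N : (0:ℝ) < C1 ^ N := pow_pos hC1pos N
    calc Real.log (ENr N σ z) ≤ Real.log (CN * C1 ^ N) := Real.log_le_log hEpos hEleGb
      _ = Real.log σ⁻¹ + (-(N : ℝ) / 2) * Real.log (2 * π) + (N : ℝ) * Real.log C1 := by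
          rw [Real.log_mul hCNpos.ne' hC1N.ne', Real.log_pow, hlCN2]


set_option maxHeartbeats 1600000 in
theorem core (z σ : ℝ) (hσ : 0 < σ) (ν : ℝ → ℝ) (hm : Measurable ν) (hpos : ∀ x, 0 ≤ ν x)
    (h1 : (∫ t : ℝ, ν t) = 1) (hm2 : Integrable fun x : ℝ => x ^ 2 * ν x)
    (hent : Integrable fun x : ℝ => ν x * Real.log (ν x / nuSigma σ x))
    (hlogz : Integrable fun x : ℝ => ν x * Real.log (σ * (x ^ 2 + z ^ 2))) :
    Gfun z σ ν ≤ Filter.liminf (fun N : ℕ => (N : ℝ)⁻¹ * Real.log (ENr N σ z)) Filter.atTop := by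
  have hνi : Integrable ν := by
    by_contra hc
    rw [integral_undef hc] at h1
    norm_num at h1
  have hg2 : Integrable (fun t : ℝ => ν t * t ^ 2) :=
    hm2.congr (Filter.Eventually.of_forall fun x => mul_comm _ _)
  have hg1 : Integrable (fun t : ℝ => ν t * t) := by
    apply Integrable.mono' (hνi.add hg2)
    · exact (hm.mul measurable_id).aestronglyMeasurable
    · filter_upwards with t
      rw [Real.norm_eq_abs, abs_mul, abs_of_nonneg (hpos t), Pi.add_apply]
      have habs : |t| ≤ 1 + t ^ 2 := by nlinarith [abs_nonneg t, sq_abs t]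
      nlinarith [hpos t, mul_le_mul_of_nonneg_left habs (hpos t)]
  have haez : ∀ᵐ t : ℝ, 0 < t ^ 2 + z ^ 2 := by
    by_cases hz : z = 0
    · subst hz
      have h0 : (volume : Measure ℝ) {(0:ℝ)} = 0 := measure_singleton 0
      rw [show {(0:ℝ)} = {t : ℝ | t = 0} from rfl] at h0
      rw [ae_iff]
      refine measure_mono_null ?_ h0
      intro t ht
      simp only [Set.mem_setOf_eq, not_lt] at ht ⊢
      nlinarith [sq_nonneg t, ht]
    · filter_upwards with t
      have : 0 < z ^ 2 := lt_of_le_of_ne (sq_nonneg _) (Ne.symm (pow_ne_zero 2 hz))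
      nlinarith [sq_nonneg t]
  have hglog : Integrable (fun t : ℝ => ν t * Real.log (t ^ 2 + z ^ 2)) := by
    refine (hlogz.sub (hνi.mul_const (Real.log σ))).congr ?_
    filter_upwards [haez] with t ht
    simp only [Pi.sub_apply]
    rw [Real.log_mul hσ.ne' ht.ne']
    ring
  have hJz : (∫ t : ℝ, ν t * Real.log (σ * (t ^ 2 + z ^ 2)))
      = Real.log σ + ∫ t : ℝ, ν t * Real.log (t ^ 2 + z ^ 2) := by
    have he : (fun t : ℝ => ν t * Real.log (σ * (t ^ 2 + z ^ 2)))
        =ᵐ[volume] fun t => ν t * Real.log σ + ν t * Real.log (t ^ 2 + z ^ 2) := by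
      filter_upwards [haez] with t ht
      rw [Real.log_mul hσ.ne' ht.ne']
      ring
    rw [integral_congr_ae he, integral_add (hνi.mul_const _) hglog, integral_mul_const, h1,
      one_mul]
  have hsq2π : (0:ℝ) < Real.sqrt (2 * π) := Real.sqrt_pos.mpr (by positivity)
  have hc0 : (0:ℝ) < Real.sqrt (2 * π) * σ := mul_pos hsq2π hσ
  have hlns : ∀ t : ℝ, Real.log (nuSigma σ t)
      = -Real.log (Real.sqrt (2 * π) * σ) + -t ^ 2 / (2 * σ ^ 2) := by
    intro t
    unfold nuSigma
    rw [Real.log_mul (inv_ne_zero hc0.ne') (Real.exp_pos _).ne', Real.log_inv, Real.log_exp]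
  have hnusig_int : Integrable (fun t : ℝ => ν t * Real.log (nuSigma σ t)) := by
    refine ((hνi.const_mul (-Real.log (Real.sqrt (2 * π) * σ))).add
      (hg2.const_mul (-(1 / (2 * σ ^ 2))))).congr (Filter.Eventually.of_forall fun t => ?_)
    simp only [Pi.add_apply]
    rw [hlns t]
    field_simp
  have hnusig_val : (∫ t : ℝ, ν t * Real.log (nuSigma σ t))
      = -Real.log (Real.sqrt (2 * π) * σ) - (∫ t : ℝ, ν t * t ^ 2) / (2 * σ ^ 2) := by
    have he : (fun t : ℝ => ν t * Real.log (nuSigma σ t))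
        =ᵐ[volume] fun t => (-Real.log (Real.sqrt (2 * π) * σ)) * ν t
          + (-(1 / (2 * σ ^ 2))) * (ν t * t ^ 2) := by
      filter_upwards with t
      rw [hlns t]
      field_simp
    rw [integral_congr_ae he, integral_add (hνi.const_mul _) (hg2.const_mul _),
      MeasureTheory.integral_const_mul, MeasureTheory.integral_const_mul, h1]
    ring
  have hnuσpos : ∀ t : ℝ, 0 < nuSigma σ t := fun t =>
    mul_pos (inv_pos.mpr hc0) (Real.exp_pos _)
  have hrel : ∀ t : ℝ, ν t * Real.log (ν t)
      = ν t * Real.log (ν t / nuSigma σ t) + ν t * Real.log (nuSigma σ t) := by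
    intro t
    rcases (hpos t).lt_or_eq with h | h
    · rw [Real.log_div h.ne' (hnuσpos t).ne']
      ring
    · rw [← h]
      ring
  have hgnu : Integrable (fun t : ℝ => ν t * Real.log (ν t)) :=
    (hent.add hnusig_int).congr (Filter.Eventually.of_forall fun t => (hrel t).symm)
  have hInueq : (∫ t : ℝ, ν t * Real.log (ν t))
      = (∫ t : ℝ, ν t * Real.log (ν t / nuSigma σ t))
        + (-Real.log (Real.sqrt (2 * π) * σ) - (∫ t : ℝ, ν t * t ^ 2) / (2 * σ ^ 2)) := by
    rw [← hnusig_val, ← integral_add hent hnusig_int]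
    exact integral_congr_ae (Filter.Eventually.of_forall fun t => hrel t)
  have hCval : Real.log (Real.sqrt (2 * π) * σ) = Real.log (2 * π) / 2 + Real.log σ := by
    rw [Real.log_mul hsq2π.ne' hσ.ne', Real.log_sqrt (by positivity)]
  -- double integral
  have hin : ∀ x₁ : ℝ, (∫ x₂ : ℝ, ν x₁ * ν x₂ * (x₁ - x₂) ^ 2)
      = ν x₁ * x₁ ^ 2 - (2 * (∫ t : ℝ, ν t * t)) * (ν x₁ * x₁)
        + (∫ t : ℝ, ν t * t ^ 2) * ν x₁ := by
    intro x₁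
    have e : (fun x₂ : ℝ => ν x₁ * ν x₂ * (x₁ - x₂) ^ 2)
        = fun x₂ => ν x₁ * (x₁ ^ 2 * ν x₂ + (-2 * x₁) * (ν x₂ * x₂) + ν x₂ * x₂ ^ 2) := by
      funext x₂; ring
    have hia : Integrable (fun x₂ : ℝ => x₁ ^ 2 * ν x₂ + (-2 * x₁) * (ν x₂ * x₂)) :=
      (hνi.const_mul _).add (hg1.const_mul _)
    rw [e, MeasureTheory.integral_const_mul,
      integral_add hia (hg2) , integral_add (hνi.const_mul _) (hg1.const_mul _),
      MeasureTheory.integral_const_mul, MeasureTheory.integral_const_mul, h1]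
    ring
  have hD : (∫ x₁ : ℝ, ∫ x₂ : ℝ, ν x₁ * ν x₂ * (x₁ - x₂) ^ 2)
      = 2 * (∫ t : ℝ, ν t * t ^ 2) - 2 * (∫ t : ℝ, ν t * t) ^ 2 := by
    simp only [hin]
    have hib : Integrable (fun x₁ : ℝ => ν x₁ * x₁ ^ 2
        - (2 * (∫ t : ℝ, ν t * t)) * (ν x₁ * x₁)) := hg2.sub (hg1.const_mul _)
    rw [integral_add hib (hνi.const_mul _), integral_sub hg2 (hg1.const_mul _),
      MeasureTheory.integral_const_mul, MeasureTheory.integral_const_mul, h1]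
    ring
  -- abbreviations
  set Iz := ∫ t : ℝ, ν t * Real.log (t ^ 2 + z ^ 2) with hIz
  set m2 := ∫ t : ℝ, ν t * t ^ 2 with hm2'
  set m1 := ∫ t : ℝ, ν t * t with hm1'
  set Inu := ∫ t : ℝ, ν t * Real.log (ν t) with hInu'
  set Dq := 2 * m2 - 2 * m1 ^ 2 with hDq
  have hGeq : Gfun z σ ν = (Iz - m2 / (2 * σ ^ 2) - Real.log (2 * π) / 2 - Inu)
      - ((1 - (σ ^ 2)⁻¹) / 4) * Dq := by
    unfold Gfun
    rw [hJz, hD]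
    have hσ2 : (σ:ℝ) ^ 2 ≠ 0 := by positivity
    rw [hInueq, hCval]
    field_simp
    ring
  -- the sequence of lower bounds
  set c : ℕ → ℝ := fun N => (Iz - m2 / (2 * σ ^ 2) - Real.log (2 * π) / 2 - Inu)
      - ((1 - (σ ^ 2)⁻¹) / 4) * Dq * (((N : ℝ) - 1) / (N : ℝ))
      - Real.log σ * ((N : ℝ))⁻¹ with hc
  set f : ℕ → ℝ := fun N => (N : ℝ)⁻¹ * Real.log (ENr N σ z) with hf
  have hcle : ∀ N : ℕ, 1 ≤ N → c N ≤ f N := by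
    intro N hN
    have hNpos : (0:ℝ) < (N : ℝ) := by exact_mod_cast hN
    have hkey := (keyN σ z hσ ν hm hpos hνi h1 hg2 hg1 hglog hgnu N hN).2.1
    have hmul := mul_le_mul_of_nonneg_left hkey (inv_nonneg.mpr hNpos.le)
    have heq : (N : ℝ)⁻¹ * ((N : ℝ) * Iz - ((N : ℝ) / 2) * Real.log (2 * π) - Real.log σ
        - (1 - (σ ^ 2)⁻¹) / (2 * (N : ℝ)) * ((N : ℝ) * ((N : ℝ) - 1) / 2) * (2 * m2 - 2 * m1 ^ 2)
        - (N : ℝ) * m2 / (2 * σ ^ 2) - (N : ℝ) * Inu) = c N := by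
      simp only [hc, hDq]
      field_simp
      ring
    rw [heq] at hmul
    exact hmul
  have hub : ∀ N : ℕ, 1 ≤ N → f N ≤ |Real.log σ⁻¹| + |Real.log (2 * π)| / 2
      + |Real.log (∫ t : ℝ, (t ^ 2 + z ^ 2) * Real.exp (-(min 1 (σ ^ 2)⁻¹ / 2) * t ^ 2))| := by
    intro N hN
    have hNpos : (0:ℝ) < (N : ℝ) := by exact_mod_cast hN
    have hNinv1 : (N : ℝ)⁻¹ ≤ 1 := by
      rw [inv_le_one_iff₀]
      right
      exact_mod_cast hN
    have hkey := (keyN σ z hσ ν hm hpos hνi h1 hg2 hg1 hglog hgnu N hN).2.2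
    have hmul := mul_le_mul_of_nonneg_left hkey (inv_nonneg.mpr hNpos.le)
    set L := Real.log (∫ t : ℝ, (t ^ 2 + z ^ 2) * Real.exp (-(min 1 (σ ^ 2)⁻¹ / 2) * t ^ 2))
    have heq : (N : ℝ)⁻¹ * (Real.log σ⁻¹ + (-(N : ℝ) / 2) * Real.log (2 * π) + (N : ℝ) * L)
        = (N : ℝ)⁻¹ * Real.log σ⁻¹ - Real.log (2 * π) / 2 + L := by
      field_simp
      ring
    rw [heq] at hmul
    refine le_trans hmul ?_
    have h1' : (N : ℝ)⁻¹ * Real.log σ⁻¹ ≤ |Real.log σ⁻¹| := by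
      nlinarith [le_abs_self (Real.log σ⁻¹), neg_abs_le (Real.log σ⁻¹),
        inv_nonneg.mpr hNpos.le, abs_nonneg (Real.log σ⁻¹)]
    have h2' : -Real.log (2 * π) / 2 ≤ |Real.log (2 * π)| / 2 := by
      have := neg_abs_le (Real.log (2 * π)); linarith
    have h3' : L ≤ |L| := le_abs_self _
    linarith
  have htend : Tendsto c atTop (𝓝 (Gfun z σ ν)) := by
    have hinv : Tendsto (fun N : ℕ => ((N : ℝ))⁻¹) atTop (𝓝 0) :=
      tendsto_inv_atTop_nhds_zero_nat
    have hrat : Tendsto (fun N : ℕ => (((N : ℝ)) - 1) / (N : ℝ)) atTop (𝓝 1) := by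
      have he : ∀ᶠ N : ℕ in atTop, 1 - ((N : ℝ))⁻¹ = (((N : ℝ)) - 1) / (N : ℝ) := by
        filter_upwards [eventually_ge_atTop 1] with N hN
        have hNpos : (0:ℝ) < (N : ℝ) := by exact_mod_cast hN
        field_simp
      have := (tendsto_const_nhds (x := (1:ℝ))).sub hinv
      rw [sub_zero] at this
      exact Tendsto.congr' he this
    have h1t : Tendsto c atTop (𝓝 ((Iz - m2 / (2 * σ ^ 2) - Real.log (2 * π) / 2 - Inu)
        - ((1 - (σ ^ 2)⁻¹) / 4) * Dq * 1 - Real.log σ * 0)) := by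
      exact (tendsto_const_nhds.sub ((tendsto_const_nhds (x := ((1 - (σ ^ 2)⁻¹) / 4) * Dq)).mul
        hrat)).sub ((tendsto_const_nhds (x := Real.log σ)).mul hinv)
    rw [hGeq]
    simpa using h1t
  have hev : ∀ᶠ N : ℕ in atTop, c N ≤ f N := eventually_atTop.mpr ⟨1, hcle⟩
  have hevub : ∀ᶠ N : ℕ in atTop, f N ≤ |Real.log σ⁻¹| + |Real.log (2 * π)| / 2
      + |Real.log (∫ t : ℝ, (t ^ 2 + z ^ 2) * Real.exp (-(min 1 (σ ^ 2)⁻¹ / 2) * t ^ 2))| :=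
    eventually_atTop.mpr ⟨1, hub⟩
  have hco : IsCoboundedUnder (· ≥ ·) atTop f :=
    isCoboundedUnder_ge_of_eventually_le atTop hevub
  have hbd : IsBoundedUnder (· ≥ ·) atTop c := htend.isBoundedUnder_ge
  calc Gfun z σ ν = liminf c atTop := (htend.liminf_eq).symm
    _ ≤ liminf f atTop := liminf_le_liminf hev hbd hco


lemma admissible_witness (z σ : ℝ) (hσ : 0 < σ) :
    Admissible z σ (Set.indicator (Set.Icc (1:ℝ) 2) fun _ => (1:ℝ)) := by
  set ι : ℝ → ℝ := Set.indicator (Set.Icc (1:ℝ) 2) fun _ => (1:ℝ) with hι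
  have hms : MeasurableSet (Set.Icc (1:ℝ) 2) := measurableSet_Icc
  have hmeas : Measurable ι := measurable_const.indicator hms
  have hintOn : ∀ g : ℝ → ℝ, ContinuousOn g (Set.Icc (1:ℝ) 2) →
      Integrable (Set.indicator (Set.Icc (1:ℝ) 2) g) := by
    intro g hg
    rw [integrable_indicator_iff hms]
    exact hg.integrableOn_compact isCompact_Icc
  have hnuσpos : ∀ t : ℝ, 0 < nuSigma σ t := by
    intro t
    have hsq2π : (0:ℝ) < Real.sqrt (2 * π) := Real.sqrt_pos.mpr (by positivity)
    exact mul_pos (inv_pos.mpr (mul_pos hsq2π hσ)) (Real.exp_pos _)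
  have hcont : Continuous (nuSigma σ) := by
    unfold nuSigma
    exact continuous_const.mul (Real.continuous_exp.comp ((continuous_pow 2).neg.div_const _))
  refine ⟨hmeas, Filter.Eventually.of_forall fun x =>
    Set.indicator_nonneg (fun _ _ => zero_le_one) x, ?_, ?_, ?_, ?_⟩
  · rw [hι, MeasureTheory.integral_indicator hms]
    simp [Real.volume_Icc]
    norm_num
  · have he : (fun x : ℝ => x ^ 2 * ι x) = Set.indicator (Set.Icc (1:ℝ) 2) (fun x => x ^ 2) := by
      funext x
      by_cases hx : x ∈ Set.Icc (1:ℝ) 2 <;> simp [hι, hx]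
    rw [he]
    exact hintOn _ (continuous_pow 2).continuousOn
  · have he : (fun x : ℝ => ι x * Real.log (ι x / nuSigma σ x))
        = Set.indicator (Set.Icc (1:ℝ) 2) (fun x => Real.log ((nuSigma σ x)⁻¹)) := by
      funext x
      by_cases hx : x ∈ Set.Icc (1:ℝ) 2 <;> simp [hι, hx, one_div]
    rw [he]
    refine hintOn _ fun x _ => ContinuousAt.continuousWithinAt ?_
    exact (hcont.continuousAt.inv₀ (hnuσpos x).ne').log (inv_ne_zero (hnuσpos x).ne')
  · have he : (fun x : ℝ => ι x * Real.log (σ * (x ^ 2 + z ^ 2)))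
        = Set.indicator (Set.Icc (1:ℝ) 2) (fun x => Real.log (σ * (x ^ 2 + z ^ 2))) := by
      funext x
      by_cases hx : x ∈ Set.Icc (1:ℝ) 2 <;> simp [hι, hx]
    rw [he]
    refine hintOn _ fun x hx => ContinuousAt.continuousWithinAt ?_
    have hx1 : (1:ℝ) ≤ x := hx.1
    have hx2 : (1:ℝ) ≤ x ^ 2 := by nlinarith
    have hpos : 0 < σ * (x ^ 2 + z ^ 2) := by
      have : (0:ℝ) < x ^ 2 + z ^ 2 := by nlinarith [sq_nonneg z]
      exact mul_pos hσ this
    exact ((continuous_const.mul ((continuous_pow 2).add continuous_const)).continuousAt).log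
      hpos.ne'

end LGEN


/-- Lower bound: for every admissible `ν`,
`liminf_{N→∞} N⁻¹ log E_N(z;σ) ≥ 𝒢_{z;σ}(ν)`; consequently the liminf dominates the
supremum of `𝒢_{z;σ}` over all admissible `ν`. -/
theorem liminf_log_EN_ge_G (z σ : ℝ) (hσ : 0 < σ) :
    (∀ ν : ℝ → ℝ, Admissible z σ ν →
      Gfun z σ ν ≤
        Filter.liminf (fun N : ℕ => (N : ℝ)⁻¹ * Real.log (ENr N σ z)) Filter.atTop) ∧
    (⨆ ν : {ν : ℝ → ℝ // Admissible z σ ν}, Gfun z σ ν.1) ≤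
      Filter.liminf (fun N : ℕ => (N : ℝ)⁻¹ * Real.log (ENr N σ z)) Filter.atTop := by
  have part1 : ∀ ν : ℝ → ℝ, Admissible z σ ν →
      Gfun z σ ν ≤
        Filter.liminf (fun N : ℕ => (N : ℝ)⁻¹ * Real.log (ENr N σ z)) Filter.atTop := by
    intro ν hA
    obtain ⟨hm, hae, h1, hm2, hent, hlogz⟩ := hA
    set ν' : ℝ → ℝ := fun x => max (ν x) 0 with hν'
    have haeq : ∀ᵐ x : ℝ, ν' x = ν x := hae.mono fun x hx => max_eq_left hx
    have hGeq : Gfun z σ ν = Gfun z σ ν' := by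
      unfold Gfun
      have e1 : (fun x : ℝ => ν x * Real.log (ν x / nuSigma σ x))
          =ᵐ[volume] fun x => ν' x * Real.log (ν' x / nuSigma σ x) :=
        haeq.mono fun x hx => by simp only [hx]
      have e2 : (fun x : ℝ => ν x * Real.log (σ * (x ^ 2 + z ^ 2)))
          =ᵐ[volume] fun x => ν' x * Real.log (σ * (x ^ 2 + z ^ 2)) :=
        haeq.mono fun x hx => by simp only [hx]
      have e3 : (fun x₁ : ℝ => ∫ x₂ : ℝ, ν x₁ * ν x₂ * (x₁ - x₂) ^ 2)
          =ᵐ[volume] fun x₁ => ∫ x₂ : ℝ, ν' x₁ * ν' x₂ * (x₁ - x₂) ^ 2 := by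
        filter_upwards [haeq] with x₁ hx₁
        simp only [hx₁]
        exact integral_congr_ae (haeq.mono fun x₂ hx₂ => by simp only [hx₂])
      rw [integral_congr_ae e1, integral_congr_ae e2, integral_congr_ae e3]
    rw [hGeq]
    refine LGEN.core z σ hσ ν' (hm.max measurable_const) (fun x => le_max_right _ _) ?_ ?_ ?_ ?_
    · rw [integral_congr_ae haeq]
      exact h1
    · exact hm2.congr (haeq.mono fun x hx => by simp only [hx])
    · exact hent.congr (haeq.mono fun x hx => by simp only [hx])
    · exact hlogz.congr (haeq.mono fun x hx => by simp only [hx])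
  refine ⟨part1, ?_⟩
  haveI : Nonempty {ν : ℝ → ℝ // Admissible z σ ν} :=
    ⟨⟨_, LGEN.admissible_witness z σ hσ⟩⟩
  exact ciSup_le fun ν => part1 ν.1 ν.2
end

section
/- Let K ≥ 1 be an integer, σ > 0, and t ∈ ℝ. Define ε_K(x) := σ^{-1} (2π)^{-K/2} · ∏_{1 ≤ k < l ≤ K} exp(-(1/(2K))(1 - σ^{-2})(x_k - x_l)^2) · ∏_{n=1}^K (x_n^2 + t) exp(-x_n^2/(2σ^2)) for x ∈ ℝ^K. Then Ê_{2K}(t;σ) = σ · ∫_{ℝ^K} ∫_{ℝ^K} exp( -(1/4)(1 - σ^{-2}) · ( K^{-1/2} ∑_{k=1}^K (x_k - x̃_k) )^2 ) · ε_K(x) · ε_K(x̃) dx dx̃. -/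
open MeasureTheory Real Finset Filter

/-- `Ê_N(t;σ) = ∫ ∏ (xₙ² + t) p_{N,σ}(x) dx`, where the real parameter `t` plays the role
of `z²`. -/
noncomputable def EhatN (N : ℕ) (σ : ℝ) (t : ℝ) : ℝ :=
  ∫ x : Fin N → ℝ, (∏ n : Fin N, ((x n) ^ 2 + t)) * pdensity N σ x

/-- The (unnormalized) signed integrand
`ε_K(x) = σ⁻¹ (2π)^{-K/2} ∏_{k<l} exp(-(1/(2K))(1-σ⁻²)(x_k-x_l)²)
  ∏ₙ (xₙ² + t) exp(-xₙ²/(2σ²))`. -/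
noncomputable def epsK (K : ℕ) (σ t : ℝ) (x : Fin K → ℝ) : ℝ :=
  σ⁻¹ * (2 * π) ^ (-(K : ℝ) / 2) *
    (∏ k : Fin K, ∏ l ∈ Finset.univ.filter (fun l => k < l),
      Real.exp (-(1 / (2 * (K : ℝ))) * (1 - (σ ^ 2)⁻¹) * (x k - x l) ^ 2)) *
    ∏ n : Fin K, ((x n) ^ 2 + t) * Real.exp (-(x n) ^ 2 / (2 * σ ^ 2))

/-!
Summing the pair terms, `p_{N,σ}(x)` is `σ⁻¹ (2π)^{-N/2} exp (-Q/2 + (1 - σ⁻²) S² / (2N))` with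
`Q = ∑ xₙ²` and `S = ∑ xₙ`. Split the `2K` coordinates into two blocks `x, x̃` with sums `S, S̃`;
the parallelogram law `(S + S̃)²/(4K) = S²/(2K) + S̃²/(2K) - (S - S̃)²/(4K)` factors `p_{2K,σ}` as
`σ` times the cross term times `p_{K,σ}(x) p_{K,σ}(x̃)`, and Fubini gives the identity.
Integrability comes from the Gaussian bound obtained from Cauchy–Schwarz, `S² ≤ N Q`.
-/

theorem Finset.two_nsmul_sum_filter_lt_of_symm {ι M : Type*} [Fintype ι] [LinearOrder ι]
    [AddCommMonoid M] (g : ι → ι → M) (hsymm : ∀ k l, g k l = g l k) (hdiag : ∀ k, g k k = 0) :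
    2 • ∑ k, ∑ l with k < l, g k l = ∑ k, ∑ l, g k l := by
  have hswap : ∑ k, ∑ l with l < k, g k l = ∑ k, ∑ l with k < l, g k l := by
    rw [Finset.sum_comm' (t' := univ) (s' := fun l => {k | l < k}) (by simp)]
    simp_rw [hsymm]
  have hrow : ∀ k, ∑ l, g k l = ∑ l with k < l, g k l + ∑ l with l < k, g k l := by
    intro k
    rw [← sum_filter_add_sum_filter_not univ (k < ·)]
    congr 1
    have : ({l | ¬k < l} : Finset ι) = insert k ({l | l < k} : Finset ι) := by
      ext l
      simp [not_lt, le_iff_lt_or_eq, or_comm, eq_comm]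
    rw [this, sum_insert (by simp), hdiag, zero_add]
  simp_rw [hrow, sum_add_distrib, hswap, two_nsmul]

theorem Finset.sum_filter_lt_sub_sq {ι : Type*} [Fintype ι] [LinearOrder ι] (f : ι → ℝ) :
    ∑ k, ∑ l with k < l, (f k - f l) ^ 2 = Fintype.card ι * ∑ i, f i ^ 2 - (∑ i, f i) ^ 2 := by
  have hfull : ∑ k, ∑ l, (f k - f l) ^ 2 = 2 * (Fintype.card ι * ∑ i, f i ^ 2 - (∑ i, f i) ^ 2) := by
    simp only [sub_sq, sum_add_distrib, sum_sub_distrib, sum_const, card_univ, nsmul_eq_mul,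
      ← mul_sum, ← sum_mul]
    ring
  have h := two_nsmul_sum_filter_lt_of_symm (fun k l => (f k - f l) ^ 2)
    (fun k l => by ring) (fun k => by ring)
  rw [hfull, two_nsmul] at h
  linarith

section FinAppend

variable (α : Type*) [MeasurableSpace α] (m n : ℕ)

def MeasurableEquiv.finAppend : (Fin m → α) × (Fin n → α) ≃ᵐ (Fin (m + n) → α) :=
  (sumPiEquivProdPi fun _ => α).symm.trans (piCongrLeft (fun _ => α) finSumFinEquiv)

variable {α m n}

@[simp]
theorem MeasurableEquiv.finAppend_apply (p : (Fin m → α) × (Fin n → α)) :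
    finAppend α m n p = Fin.append p.1 p.2 := by
  ext i
  refine Fin.addCases (fun i => ?_) (fun i => ?_) i
  · simpa [finAppend, coe_piCongrLeft, coe_sumPiEquivProdPi_symm] using
      Equiv.piCongrLeft_sumInl (fun _ => α) finSumFinEquiv p.1 p.2 i
  · simpa [finAppend, coe_piCongrLeft, coe_sumPiEquivProdPi_symm] using
      Equiv.piCongrLeft_sumInr (fun _ => α) finSumFinEquiv p.1 p.2 i

end FinAppend

section FinAppendVolume

variable {α : Type*} [MeasureSpace α] [SigmaFinite (volume : Measure α)] {m n : ℕ}

theorem MeasureTheory.measurePreserving_finAppend :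
    MeasurePreserving (MeasurableEquiv.finAppend α m n) (volume.prod volume) volume :=
  (volume_measurePreserving_piCongrLeft (fun _ => α) finSumFinEquiv).comp
    (volume_measurePreserving_sumPiEquivProdPi_symm fun _ => α)

theorem MeasureTheory.integral_eq_integral_integral_append {E : Type*} [NormedAddCommGroup E]
    [NormedSpace ℝ E] {f : (Fin (m + n) → α) → E} (hf : Integrable f) :
    ∫ z, f z = ∫ x, ∫ y, f (Fin.append x y) := by
  have hmp := measurePreserving_finAppend (α := α) (m := m) (n := n)
  rw [← hmp.integral_comp' f, integral_prod]
  · simp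
  · exact (hmp.integrable_comp_emb (MeasurableEquiv.measurableEmbedding _)).2 hf

end FinAppendVolume

theorem pdensity_eq {N : ℕ} (hN : N ≠ 0) (σ : ℝ) (x : Fin N → ℝ) :
    pdensity N σ x = σ⁻¹ * (2 * π) ^ (-(N : ℝ) / 2) *
      exp (-(∑ i, x i ^ 2) / 2 + (1 - (σ ^ 2)⁻¹) * (∑ i, x i) ^ 2 / (2 * N)) := by
  have hN' : (N : ℝ) ≠ 0 := Nat.cast_ne_zero.2 hN
  simp only [pdensity, ← exp_sum, ← mul_sum, sum_filter_lt_sub_sq, Fintype.card_fin, mul_assoc,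
    ← exp_add]
  rw [← sum_div, sum_neg_distrib]
  congr 3
  field_simp
  ring

theorem epsK_eq (K : ℕ) (σ t : ℝ) (x : Fin K → ℝ) :
    epsK K σ t x = (∏ n, (x n ^ 2 + t)) * pdensity K σ x := by
  rw [epsK, pdensity, prod_mul_distrib]
  ring

theorem pdensity_append {K : ℕ} (hK : K ≠ 0) (σ : ℝ) (x y : Fin K → ℝ) :
    pdensity (K + K) σ (Fin.append x y) =
      σ * exp (-(1 / 4) * (1 - (σ ^ 2)⁻¹) * ((√K)⁻¹ * ∑ k, (x k - y k)) ^ 2) *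
        pdensity K σ x * pdensity K σ y := by
  rw [pdensity_eq (by omega), pdensity_eq hK, pdensity_eq hK]
  simp only [Fin.sum_univ_add, Fin.append_left, Fin.append_right]
  have hconst : (2 * π) ^ (-((K + K : ℕ) : ℝ) / 2) =
      (2 * π) ^ (-(K : ℝ) / 2) * (2 * π) ^ (-(K : ℝ) / 2) := by
    rw [← rpow_add (by positivity)]
    push_cast
    ring_nf
  have hcross : ((√K)⁻¹ * ∑ k, (x k - y k)) ^ 2 = (∑ k, x k - ∑ k, y k) ^ 2 / K := by
    rw [mul_pow, inv_pow, sq_sqrt (Nat.cast_nonneg K), sum_sub_distrib]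
    ring
  have hσ : σ * (σ⁻¹ * σ⁻¹) = σ⁻¹ := by
    simpa only [inv_inv, mul_comm _ σ] using mul_self_mul_inv σ⁻¹
  have hexp : -(∑ k, x k ^ 2 + ∑ k, y k ^ 2) / 2 +
      (1 - (σ ^ 2)⁻¹) * (∑ k, x k + ∑ k, y k) ^ 2 / (2 * ((K + K : ℕ) : ℝ)) =
      -(1 / 4) * (1 - (σ ^ 2)⁻¹) * ((∑ k, x k - ∑ k, y k) ^ 2 / K) +
        (-(∑ k, x k ^ 2) / 2 + (1 - (σ ^ 2)⁻¹) * (∑ k, x k) ^ 2 / (2 * K)) +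
        (-(∑ k, y k ^ 2) / 2 + (1 - (σ ^ 2)⁻¹) * (∑ k, y k) ^ 2 / (2 * K)) := by
    push_cast
    ring
  rw [hconst, hcross, hexp, exp_add, exp_add]
  nth_rw 1 [← hσ]
  ring

theorem abs_pdensity_le {N : ℕ} (hN : N ≠ 0) (σ : ℝ) (x : Fin N → ℝ) :
    |pdensity N σ x| ≤
      |σ⁻¹| * (2 * π) ^ (-(N : ℝ) / 2) * ∏ n, exp (-(min 1 (σ ^ 2)⁻¹ / 2) * x n ^ 2) := by
  rw [pdensity_eq hN, abs_mul, abs_mul, abs_of_pos (rpow_pos_of_pos (by positivity) _),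
    abs_of_pos (exp_pos _), ← exp_sum, ← mul_sum]
  gcongr
  have hN' : (0 : ℝ) < N := by positivity
  set s := (σ ^ 2)⁻¹
  have hmean : (∑ i, x i) ^ 2 / N ≤ ∑ i, x i ^ 2 := by
    rw [div_le_iff₀ hN', mul_comm]
    simpa using sq_sum_le_card_mul_sum_sq (s := univ) (f := x)
  rcases le_total s 1 with h | h
  · rw [min_eq_right h]
    have := mul_le_mul_of_nonneg_left hmean (sub_nonneg.2 h)
    linear_combination this / 2
  · rw [min_eq_left h]
    have := mul_le_mul_of_nonneg_right h (by positivity : 0 ≤ (∑ i, x i) ^ 2 / N)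
    linear_combination this / 2

theorem integrable_sq_add_mul_exp_neg_mul_sq {b : ℝ} (hb : 0 < b) (c : ℝ) :
    Integrable fun u : ℝ => (u ^ 2 + c) * exp (-b * u ^ 2) := by
  have hsq : Integrable fun u : ℝ => u ^ 2 * exp (-b * u ^ 2) := by
    simpa only [rpow_two] using integrable_rpow_mul_exp_neg_mul_sq hb (s := 2) (by norm_num)
  simp_rw [add_mul]
  exact hsq.add ((integrable_exp_neg_mul_sq hb).const_mul c)

theorem integrable_prod_sq_add_mul_pdensity {N : ℕ} (hN : N ≠ 0) {σ : ℝ} (hσ : σ ≠ 0) (t : ℝ) :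
    Integrable fun z : Fin N → ℝ => (∏ n, (z n ^ 2 + t)) * pdensity N σ z := by
  set b := min 1 (σ ^ 2)⁻¹ / 2
  have hb : 0 < b := by positivity
  have hdom : Integrable fun z : Fin N → ℝ => ∏ n, ((z n ^ 2 + |t|) * exp (-b * z n ^ 2)) :=
    Integrable.fin_nat_prod fun _ => integrable_sq_add_mul_exp_neg_mul_sq hb |t|
  refine (hdom.const_mul (|σ⁻¹| * (2 * π) ^ (-(N : ℝ) / 2))).mono'
    (by unfold pdensity; fun_prop) (ae_of_all _ fun z => ?_)
  have hpoly : |∏ n, (z n ^ 2 + t)| ≤ ∏ n, (z n ^ 2 + |t|) := by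
    rw [abs_prod]
    gcongr with n
    exact (abs_add_le _ _).trans_eq (by rw [abs_sq])
  calc ‖(∏ n, (z n ^ 2 + t)) * pdensity N σ z‖
      ≤ (∏ n, (z n ^ 2 + |t|)) *
          (|σ⁻¹| * (2 * π) ^ (-(N : ℝ) / 2) * ∏ n, exp (-b * z n ^ 2)) := by
        rw [norm_mul, norm_eq_abs, norm_eq_abs]
        gcongr
        exact abs_pdensity_le hN σ z
    _ = _ := by
        rw [prod_mul_distrib]
        ring

/-- Splitting identity: `Ê_{2K}(t;σ)` is a positive-definite double integral of `ε_K`: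
`Ê_{2K}(t;σ) = σ ∬ exp(-(1/4)(1-σ⁻²)(K^{-1/2} ∑ₖ (xₖ - x̃ₖ))²) ε_K(x) ε_K(x̃) dx dx̃`. -/
theorem EhatN_even_split (K : ℕ) (hK : 1 ≤ K) (σ : ℝ) (hσ : 0 < σ) (t : ℝ) :
    EhatN (2 * K) σ t =
      σ * ∫ x : Fin K → ℝ, ∫ y : Fin K → ℝ,
        Real.exp (-(1 / 4) * (1 - (σ ^ 2)⁻¹) *
            ((Real.sqrt (K : ℝ))⁻¹ * ∑ k, (x k - y k)) ^ 2) *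
          epsK K σ t x * epsK K σ t y := by
  have hK₀ : K ≠ 0 := Nat.one_le_iff_ne_zero.mp hK
  rw [EhatN, two_mul, integral_eq_integral_integral_append
    (integrable_prod_sq_add_mul_pdensity (by omega) hσ.ne' t), ← integral_const_mul]
  congr 1 with x
  rw [← integral_const_mul]
  congr 1 with y
  rw [Fin.prod_univ_add, pdensity_append hK₀, epsK_eq, epsK_eq]
  simp only [Fin.append_left, Fin.append_right]
  ring
end
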